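/- arXiv:1701.01051 — 5 statements merged into one kernel-verified Lean document; each statement's English description precedes it below -/
import Mathlib

section
/- Let u ∈ ℝ^E be a nonzero vector with Au = 0. Then u can be written as a finite sum u = Σ_i λ_i·C_i where each λ_i > 0, each C_i is a signed circuit of A whose support is contained in the support of u, and for every e in the support of C_i the sign of C_i(e) agrees with the sign of u(e). -/
/-!
If `w` is supported inside the support of `u` and has the sign of `u` at some coordinate, then
subtracting the largest multiple `t • w` that flips no sign of `u` kills a coordinate and leaves
a vector conformal to `u`. Applied to a kernel vector of strictly smaller support, this descends
by induction on the support size to a circuit conformal to `u`; applied to such a circuit `C`,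
it splits `u = t • C + u'` with `u'` a conformal kernel vector of smaller support, which is
decomposed in turn.
-/

open Matrix

/-- A signed circuit of a real matrix `A`: a nonzero vector in `ker A` whose support is
minimal with respect to inclusion among supports of nonzero kernel vectors. -/
def IsCircuitR {r m : ℕ} (A : Matrix (Fin r) (Fin m) ℝ) (C : Fin m → ℝ) : Prop :=
  C ≠ 0 ∧ A.mulVec C = 0 ∧
    ∀ v : Fin m → ℝ, v ≠ 0 → A.mulVec v = 0 →
      {e | v e ≠ 0} ⊆ {e | C e ≠ 0} → {e | v e ≠ 0} = {e | C e ≠ 0}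

open Function

section Conformal

variable {ι 𝕜 : Type*} [Field 𝕜] [LinearOrder 𝕜]

def ConformsTo (v u : ι → 𝕜) : Prop :=
  ∀ e, v e ≠ 0 → 0 < u e * v e

namespace ConformsTo

lemma support_subset {u v : ι → 𝕜} (h : ConformsTo v u) : support v ⊆ support u :=
  fun e he => left_ne_zero_of_mul (h e he).ne'

variable [IsStrictOrderedRing 𝕜]

lemma refl (u : ι → 𝕜) : ConformsTo u u :=
  fun _ h => mul_self_pos.mpr h

lemma trans {u v w : ι → 𝕜} (hwv : ConformsTo w v) (hvu : ConformsTo v u) :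
    ConformsTo w u := by
  intro e he
  have hvw := hwv e he
  have hv : v e ≠ 0 := left_ne_zero_of_mul hvw.ne'
  have : 0 < u e * w e * (v e * v e) := by
    calc 0 < u e * v e * (v e * w e) := mul_pos (hvu e hv) hvw
      _ = u e * w e * (v e * v e) := by ring
  exact pos_of_mul_pos_left this (mul_self_nonneg _)

lemma sign_eq {u v : ι → ℝ} (h : ConformsTo v u) {e : ι} (he : v e ≠ 0) :
    Real.sign (v e) = Real.sign (u e) := by
  rcases mul_pos_iff.mp (h e he) with ⟨hu, hv⟩ | ⟨hu, hv⟩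
  · rw [Real.sign_of_pos hu, Real.sign_of_pos hv]
  · rw [Real.sign_of_neg hu, Real.sign_of_neg hv]

end ConformsTo

lemma exists_pos_conformsTo_sub_smul [IsStrictOrderedRing 𝕜] [Fintype ι] {u w : ι → 𝕜}
    (hsupp : support w ⊆ support u) {e₀ : ι} (h₀ : 0 < u e₀ * w e₀) :
    ∃ t : 𝕜, 0 < t ∧ ConformsTo (u - t • w) u ∧ support (u - t • w) ⊂ support u := by
  classical
  obtain ⟨e₁, he₁, hmin⟩ := (Finset.univ.filter fun e => 0 < u e * w e).exists_min_image
    (fun e => u e / w e) ⟨e₀, by simpa using h₀⟩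
  simp only [Finset.mem_filter, Finset.mem_univ, true_and] at he₁ hmin
  have hw₁ : w e₁ ≠ 0 := right_ne_zero_of_mul he₁.ne'
  set t := u e₁ / w e₁
  have ht : 0 < t := by
    have : t = u e₁ * w e₁ / (w e₁ * w e₁) := (mul_div_mul_right _ _ hw₁).symm
    exact this ▸ div_pos he₁ (mul_self_pos.mpr hw₁)
  have hconf : ConformsTo (u - t • w) u := by
    intro e he
    simp only [Pi.sub_apply, Pi.smul_apply, smul_eq_mul] at he ⊢
    have hue : u e ≠ 0 := by
      intro hu
      have hw : w e = 0 := notMem_support.mp fun h => hsupp h hu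
      simp [hu, hw] at he
    refine lt_of_le_of_ne ?_ (mul_ne_zero hue he).symm
    by_cases hpos : 0 < u e * w e
    · have hwe : w e ≠ 0 := right_ne_zero_of_mul hpos.ne'
      have : u e * (u e - t * w e) = u e * w e * (u e / w e - t) := by field_simp
      rw [this]
      exact mul_nonneg hpos.le (sub_nonneg.mpr (hmin e hpos))
    · nlinarith [mul_self_nonneg (u e)]
  refine ⟨t, ht, hconf, Set.ssubset_iff_subset_ne.mpr ⟨hconf.support_subset, fun heq => ?_⟩⟩
  have hu₁ : e₁ ∈ support (u - t • w) := heq ▸ left_ne_zero_of_mul he₁.ne'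
  exact hu₁ (by simp [div_mul_cancel₀ _ hw₁, t])

end Conformal

section Circuit

variable {r m : ℕ} (A : Matrix (Fin r) (Fin m) ℝ)

lemma exists_ssubset_support_of_not_isCircuitR {u : Fin m → ℝ} (hu : u ≠ 0)
    (hker : A *ᵥ u = 0) (h : ¬IsCircuitR A u) :
    ∃ w, w ≠ 0 ∧ A *ᵥ w = 0 ∧ support w ⊂ support u := by
  unfold IsCircuitR at h
  push Not at h
  obtain ⟨w, hw, hwker, hsub, hne⟩ := h hu hker
  exact ⟨w, hw, hwker, Set.ssubset_iff_subset_ne.mpr ⟨hsub, hne⟩⟩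

theorem exists_isCircuitR_conformsTo {u : Fin m → ℝ} (hu : u ≠ 0) (hker : A *ᵥ u = 0) :
    ∃ C, IsCircuitR A C ∧ ConformsTo C u := by
  by_cases hcirc : IsCircuitR A u
  · exact ⟨u, hcirc, .refl u⟩
  obtain ⟨w, hw, hwker, hwu⟩ := exists_ssubset_support_of_not_isCircuitR A hu hker hcirc
  obtain ⟨e₀, he₀⟩ := ne_iff.mp hw
  obtain ⟨w', hw'ker, hw'supp, h₀⟩ : ∃ w', A *ᵥ w' = 0 ∧ support w' = support w ∧
      0 < u e₀ * w' e₀ := by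
    rcases (mul_ne_zero (hwu.subset he₀) he₀).lt_or_gt with h | h
    · exact ⟨-w, by simp [mulVec_neg, hwker], support_neg w, by simpa using h⟩
    · exact ⟨w, hwker, rfl, h⟩
  obtain ⟨t, -, hconf, hlt⟩ := exists_pos_conformsTo_sub_smul (hw'supp ▸ hwu.subset) h₀
  obtain ⟨e₂, hu₂, hw₂⟩ := Set.exists_of_ssubset hwu
  have hw'₂ : w' e₂ = 0 := notMem_support.mp (hw'supp ▸ hw₂)
  have hv : u - t • w' ≠ 0 := fun h => hu₂ (by simpa [hw'₂] using congrFun h e₂)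
  obtain ⟨C, hC, hCv⟩ :=
    exists_isCircuitR_conformsTo hv (by simp [mulVec_sub, mulVec_smul, hker, hw'ker])
  exact ⟨C, hC, hCv.trans hconf⟩
termination_by (support u).ncard
decreasing_by exact Set.ncard_lt_ncard hlt

theorem exists_conformal_circuit_decomposition {u : Fin m → ℝ} (hker : A *ᵥ u = 0) :
    ∃ (k : ℕ) (lam : Fin k → ℝ) (C : Fin k → Fin m → ℝ),
      (∀ i, 0 < lam i) ∧ (∀ i, IsCircuitR A (C i)) ∧ (∀ i, ConformsTo (C i) u) ∧
      u = ∑ i, lam i • C i := by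
  by_cases hu : u = 0
  · exact ⟨0, ![], ![], finZeroElim, finZeroElim, finZeroElim, by simp [hu]⟩
  obtain ⟨C, hC, hCu⟩ := exists_isCircuitR_conformsTo A hu hker
  obtain ⟨e₀, he₀⟩ := ne_iff.mp hC.1
  obtain ⟨t, ht, hconf, hlt⟩ := exists_pos_conformsTo_sub_smul hCu.support_subset (hCu e₀ he₀)
  obtain ⟨k, lam, Cs, hlam, hCs, hCsv, hsum⟩ := exists_conformal_circuit_decomposition
    (u := u - t • C) (by simp [mulVec_sub, mulVec_smul, hker, hC.2.1])
  refine ⟨k + 1, Fin.cons t lam, Fin.cons C Cs, Fin.cases ht hlam, Fin.cases hC hCs,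
    Fin.cases hCu fun i => (hCsv i).trans hconf, ?_⟩
  rw [Fin.sum_univ_succ]
  simp only [Fin.cons_zero, Fin.cons_succ, ← hsum]
  abel
termination_by (support u).ncard
decreasing_by exact Set.ncard_lt_ncard hlt

end Circuit

theorem stmt14_general {r m : ℕ} (A : Matrix (Fin r) (Fin m) ℝ)
    (u : Fin m → ℝ) (hker : A.mulVec u = 0) :
    ∃ (k : ℕ) (lam : Fin k → ℝ) (C : Fin k → (Fin m → ℝ)),
      (∀ i, 0 < lam i) ∧ (∀ i, IsCircuitR A (C i)) ∧
      (∀ i e, C i e ≠ 0 → u e ≠ 0 ∧ Real.sign (C i e) = Real.sign (u e)) ∧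
      u = ∑ i, lam i • C i := by
  obtain ⟨k, lam, C, hlam, hC, hCu, hsum⟩ := exists_conformal_circuit_decomposition A hker
  exact ⟨k, lam, C, hlam, hC, fun i e he => ⟨(hCu i).support_subset he, (hCu i).sign_eq he⟩,
    hsum⟩

/-- Circuit decomposition: a nonzero kernel vector of `A` is a positive combination of
signed circuits conformal to it. -/
theorem stmt14 {r m : ℕ} (A : Matrix (Fin r) (Fin m) ℝ)
    (u : Fin m → ℝ) (hu : u ≠ 0) (hker : A.mulVec u = 0) :
    ∃ (k : ℕ) (lam : Fin k → ℝ) (C : Fin k → (Fin m → ℝ)),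
      (∀ i, 0 < lam i) ∧ (∀ i, IsCircuitR A (C i)) ∧
      (∀ i e, C i e ≠ 0 → u e ≠ 0 ∧ Real.sign (C i e) = Real.sign (u e)) ∧
      u = ∑ i, lam i • C i :=
  stmt14_general A u hker
end

section
/- Let u ∈ ℤ^E be a nonzero integer vector with Au = 0. Then u can be written as a finite sum u = Σ_i λ_i·C_i where each λ_i is a positive integer, each C_i is a signed circuit of A (a {−1,0,1}-vector) whose support is contained in the support of u, and for every e in the support of C_i the sign of C_i(e) agrees with the sign of u(e). Moreover, if all coordinates of u lie in {−1, 0, 1}, then one can take all λ_i = 1 and the supports of the C_i pairwise disjoint. -/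
open Matrix

/-- A vector with all entries in `{-1,0,1}`. -/
def SignVec {m : ℕ} (C : Fin m → ℤ) : Prop := ∀ e, C e = -1 ∨ C e = 0 ∨ C e = 1

/-- A signed circuit of `A`. -/
def IsCircuit {r m : ℕ} (A : Matrix (Fin r) (Fin m) ℤ) (C : Fin m → ℤ) : Prop :=
  SignVec C ∧ C ≠ 0 ∧ A.mulVec C = 0 ∧
    ∀ v : Fin m → ℤ, v ≠ 0 → A.mulVec v = 0 →
      {e | v e ≠ 0} ⊆ {e | C e ≠ 0} → {e | v e ≠ 0} = {e | C e ≠ 0}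

/-!
It suffices to find, for every nonzero integer kernel vector `u`, one signed circuit `C`
conforming to `u` (supported inside the support of `u`, with the same signs there): then `u - C`
is again a kernel vector conforming to `u`, of smaller ℓ¹-norm, and induction produces a
decomposition with all coefficients equal to `1`.

To find `C`, take over `ℚ` a kernel vector `w` conforming to `u` whose support is minimal among
such vectors. It is then support-minimal among all kernel vectors: if a kernel vector `v` had
smaller support, subtracting the right multiple of `v` from `w` would give a conforming kernel
vector of even smaller support. For `e₀` in the support of `w`, minimality makes the columns
indexed by the rest of the support independent, so a square row selection `B` of them is
nonsingular, and Cramer's rule writes each `-w e / w e₀` as a quotient of two square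
subdeterminants of `A`. Total unimodularity makes it `0` or `±1`, so `w` is a multiple of its
sign vector, which is the circuit `C`.

Conforming summands do not cancel, so `|u e| = ∑ i, |C i e|`; when `|u e| ≤ 1` this forces the
supports of the circuits to be pairwise disjoint.
-/

open Function

section Conforms

variable {ι R : Type*}

def Conforms [Zero R] [Preorder R] [DecidableLT R] (x y : ι → R) : Prop :=
  ∀ i, x i ≠ 0 → SignType.sign (x i) = SignType.sign (y i)

variable [Ring R] [LinearOrder R] {x y z : ι → R}

theorem Conforms.support_subset (h : Conforms x y) : support x ⊆ support y := fun i hi =>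
  sign_ne_zero.mp (h i hi ▸ sign_ne_zero.mpr hi)

theorem Conforms.trans (hxy : Conforms x y) (hyz : Conforms y z) : Conforms x z := fun i hi =>
  (hxy i hi).trans (hyz i (hxy.support_subset hi))

variable [IsStrictOrderedRing R]

theorem Conforms.sign_mul_apply (h : Conforms x y) (i : ι) :
    (SignType.sign (y i) : R) * x i = |x i| := by
  by_cases hi : x i = 0
  · simp [hi]
  · rw [← h i hi, sign_mul_self]

theorem abs_sum_apply_of_conforms {κ : Type*} {s : Finset κ} {C : κ → ι → R}
    (hC : ∀ k ∈ s, Conforms (C k) (∑ k ∈ s, C k)) (i : ι) :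
    |(∑ k ∈ s, C k) i| = ∑ k ∈ s, |C k i| := by
  rw [← sign_mul_self, Finset.sum_apply, Finset.mul_sum]
  exact Finset.sum_congr rfl fun k hk => by
    rw [← Finset.sum_apply]; exact (hC k hk).sign_mul_apply i

theorem abs_add_apply_of_conforms (hx : Conforms x (x + y)) (hy : Conforms y (x + y)) (i : ι) :
    |(x + y) i| = |x i| + |y i| := by
  rw [← sign_mul_self, ← hx.sign_mul_apply, ← hy.sign_mul_apply, ← mul_add, Pi.add_apply]

end Conforms

theorem eq_zero_of_conforms_sum {ι κ : Type*} [Fintype κ] {C : κ → ι → ℤ}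
    (hC : ∀ k, Conforms (C k) (∑ k, C k)) {e : ι} (he : |(∑ k, C k) e| ≤ 1) {i j : κ} (hij : i ≠ j)
    (hi : C i e ≠ 0) : C j e = 0 := by
  by_contra hj
  have h2 : |C i e| + |C j e| ≤ |(∑ k, C k) e| := by
    rw [abs_sum_apply_of_conforms fun k _ => hC k]
    exact Finset.add_le_sum (f := fun k => |C k e|) (fun k _ => abs_nonneg _)
      (Finset.mem_univ i) (Finset.mem_univ j) hij
  linarith [Int.one_le_abs hi, Int.one_le_abs hj]

theorem sign_sub_eq_of_abs_le {α : Type*} [AddCommGroup α] [LinearOrder α] [IsOrderedAddMonoid α]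
    {a b : α} (hba : |b| ≤ |a|) (hab : a - b ≠ 0) : SignType.sign (a - b) = SignType.sign a := by
  rcases lt_trichotomy a 0 with ha | rfl | ha
  · rw [abs_of_neg ha] at hba
    rw [sign_neg ha, sign_neg (lt_of_le_of_ne
      (sub_nonpos.mpr ((le_neg.mpr hba).trans (neg_abs_le b))) hab)]
  · simp_all
  · rw [abs_of_pos ha] at hba
    rw [sign_pos ha, sign_pos (lt_of_le_of_ne' (sub_nonneg.mpr ((le_abs_self b).trans hba)) hab)]

theorem conforms_sub_of_abs_le {ι α : Type*} [AddCommGroup α] [LinearOrder α]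
    [IsOrderedAddMonoid α] {x y : ι → α} (h : ∀ i, |x i| ≤ |y i|) : Conforms (y - x) y :=
  fun i hi => sign_sub_eq_of_abs_le (h i) hi

theorem exists_conforms_sub_smul {ι K : Type*} [Finite ι] [Field K] [LinearOrder K]
    [IsStrictOrderedRing K] {v w : ι → K} (hv : v ≠ 0) (hvw : support v ⊂ support w) :
    ∃ t : K, w - t • v ≠ 0 ∧ Conforms (w - t • v) w ∧ support (w - t • v) ⊂ support w := by
  obtain ⟨e₀, he₀, hmin⟩ := (support v).exists_min_image (fun e => |w e / v e|) (Set.toFinite _)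
    (support_nonempty_iff.mpr hv)
  -- the ratio of least absolute value, so that `t • v` never overshoots `w`
  set t := w e₀ / v e₀
  have hle : ∀ e, |t * v e| ≤ |w e| := by
    intro e
    by_cases he : v e = 0
    · simp [he]
    · calc |t * v e| = |t| * |v e| := abs_mul _ _
        _ ≤ |w e / v e| * |v e| := mul_le_mul_of_nonneg_right (hmin e he) (abs_nonneg _)
        _ = |w e| := by rw [← abs_mul, div_mul_cancel₀ _ he]
  have hconf : Conforms (w - t • v) w := conforms_sub_of_abs_le hle
  obtain ⟨e₁, he₁w, he₁v⟩ := (Set.ssubset_iff_of_subset hvw.subset).mp hvw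
  refine ⟨t, fun h => he₁w ?_, hconf, (Set.ssubset_iff_of_subset hconf.support_subset).mpr
    ⟨e₀, hvw.subset he₀, ?_⟩⟩
  · simpa [notMem_support.mp he₁v] using congrFun h e₁
  · simp [t, div_mul_cancel₀ _ (show v e₀ ≠ 0 from he₀)]

namespace Matrix

variable {m n s R K : Type*}

def IsElementaryVector [Fintype n] [Semiring R] (A : Matrix m n R) (w : n → R) : Prop :=
  w ≠ 0 ∧ A *ᵥ w = 0 ∧
    ∀ v, v ≠ 0 → A *ᵥ v = 0 → support v ⊆ support w → support v = support w

theorem exists_isElementaryVector_conforms [Fintype n] [Field K] [LinearOrder K]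
    [IsStrictOrderedRing K] (A : Matrix m n K) {u : n → K} (hu : u ≠ 0) (hAu : A *ᵥ u = 0) :
    ∃ w, A.IsElementaryVector w ∧ Conforms w u := by
  obtain ⟨w, ⟨hw, hAw, hwu⟩, hmin⟩ := (InvImage.wf support wellFounded_lt).has_min
    {w | w ≠ 0 ∧ A *ᵥ w = 0 ∧ Conforms w u} ⟨u, hu, hAu, fun _ _ => rfl⟩
  refine ⟨w, ⟨hw, hAw, fun v hv hAv hvw => ?_⟩, hwu⟩
  by_contra hne
  obtain ⟨t, ht, htw, hts⟩ := exists_conforms_sub_smul hv (hvw.ssubset_of_ne hne)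
  exact hmin _ ⟨ht, by simp [mulVec_sub, mulVec_smul, hAw, hAv], htw.trans hwu⟩ hts

theorem mulVec_extend_zero [Fintype n] [Fintype s] [NonUnitalNonAssocSemiring R]
    (A : Matrix m n R) {g : s → n} (hg : Injective g) (c : s → R) :
    A *ᵥ extend g c 0 = A.submatrix id g *ᵥ c := by
  ext i
  refine (Fintype.sum_of_injective g hg _ _ (fun e he => ?_) fun j => ?_).symm
  · simp [extend_apply' _ _ _ he]
  · simp [hg.extend_apply]

theorem exists_det_submatrix_ne_zero [Field K] [Fintype m] [Fintype s] [DecidableEq s]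
    {M : Matrix m s K} (hM : LinearIndependent K M.col) :
    ∃ ρ : s → m, (M.submatrix ρ id).det ≠ 0 := by
  obtain ⟨κ, a, -, hspan, hli⟩ := exists_linearIndependent' K M.row
  have : Finite κ := hli.finite
  have := Fintype.ofFinite κ
  have hcard : Fintype.card s = Fintype.card κ := by
    rw [linearIndependent_iff_card_eq_finrank_span.mp hli, Set.finrank, hspan,
      ← rank_eq_finrank_span_row, ← rank_transpose]
    exact (LinearIndependent.rank_matrix (M := Mᵀ) hM).symm
  let e := Fintype.equivOfCardEq hcard
  refine ⟨a ∘ e, ?_⟩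
  rw [← isUnit_iff_ne_zero, ← isUnit_iff_isUnit_det, ← linearIndependent_rows_iff_isUnit]
  exact hli.comp e e.injective

theorem IsTotallyUnimodular.map [CommRing R] [CommRing K] {A : Matrix m n R}
    (hA : A.IsTotallyUnimodular) (f : R →+* K) : (A.map f).IsTotallyUnimodular := by
  intro k g h hg hh
  obtain ⟨σ, hσ⟩ := hA k g h hg hh
  exact ⟨σ, by rw [submatrix_map, ← RingHom.mapMatrix_apply, ← RingHom.map_det, ← hσ,
    SignType.map_cast]⟩

theorem IsTotallyUnimodular.apply_mem_range_of_submatrix_mulVec_eq_col [Fintype s]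
    [DecidableEq s] [CommRing R] {A : Matrix m n R} (hA : A.IsTotallyUnimodular)
    {ρ : s → m} {g : s → n} (hdet : (A.submatrix ρ g).det ≠ 0) {x : s → R} {e₀ : n}
    (hx : A.submatrix ρ g *ᵥ x = fun k => A (ρ k) e₀) (j : s) :
    x j ∈ Set.range SignType.cast := by
  obtain ⟨σ, hσ⟩ := (isTotallyUnimodular_iff_fintype A).mp hA s ρ g
  obtain ⟨τ, hτ⟩ := (isTotallyUnimodular_iff_fintype A).mp hA s ρ (update g j e₀)
  have hcramer : (A.submatrix ρ g).det * x j = τ := by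
    have hupd : (A.submatrix ρ g).updateCol j (fun k => A (ρ k) e₀) =
        A.submatrix ρ (update g j e₀) := by
      ext k l
      by_cases hl : l = j
      · subst hl; simp
      · simp [hl]
    rw [hτ, ← hupd, ← cramer_apply, ← hx, cramer_eq_adjugate_mulVec, mulVec_mulVec, adjugate_mul,
      smul_mulVec, one_mulVec, Pi.smul_apply, smul_eq_mul]
  have hσσ : σ * σ = 1 := by
    rw [← hσ] at hdet; cases σ <;> simp_all
  refine ⟨σ * τ, ?_⟩
  rw [SignType.coe_mul, ← hcramer, ← hσ, ← mul_assoc, ← SignType.coe_mul, hσσ, SignType.coe_one,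
    one_mul]


theorem IsElementaryVector.linearIndependent_submatrix_col [Fintype n] [Fintype s] [CommRing R]
    {A : Matrix m n R} {w : n → R} (hw : A.IsElementaryVector w) {g : s → n} (hg : Injective g)
    (hgw : ∀ j, w (g j) ≠ 0) {e₀ : n} (he₀ : w e₀ ≠ 0) (hge₀ : ∀ j, g j ≠ e₀) :
    LinearIndependent R (A.submatrix id g).col := by
  obtain ⟨-, -, hmin⟩ := hw
  rw [← mulVec_injective_iff, ← coe_mulVecLin, injective_iff_map_eq_zero]
  intro c hc
  rw [mulVecLin_apply, ← mulVec_extend_zero A hg] at hc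
  by_contra hc0
  have hsupp : support (extend g c 0) ⊆ support w := fun e he => by
    by_contra hwe
    exact he (extend_apply' _ _ _ fun ⟨j, hj⟩ => hwe (hj ▸ hgw j))
  have hne : extend g c 0 ≠ 0 := by
    obtain ⟨j, hj⟩ := Function.ne_iff.mp hc0
    exact Function.ne_iff.mpr ⟨g j, by simpa [hg.extend_apply] using hj⟩
  have he₀c : e₀ ∈ support (extend g c 0) := hmin _ hne hc hsupp ▸ he₀
  exact he₀c (extend_apply' _ _ _ fun ⟨j, hj⟩ => hge₀ j hj)

theorem IsElementaryVector.div_mem_range_signType_cast [Fintype m] [Fintype n] [Field K]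
    {A : Matrix m n K} (hA : A.IsTotallyUnimodular) {w : n → K} (hw : A.IsElementaryVector w)
    {e₀ : n} (he₀ : w e₀ ≠ 0) (e : n) : w e / w e₀ ∈ Set.range SignType.cast := by
  classical
  by_cases he : e ≠ e₀ ∧ w e ≠ 0
  swap
  · by_cases hee₀ : e = e₀
    · exact ⟨1, by simp [hee₀, he₀]⟩
    · exact ⟨0, by simp [not_and_not_right.mp he hee₀]⟩
  let g : {e // e ≠ e₀ ∧ w e ≠ 0} → n := Subtype.val
  have hg : Injective g := Subtype.val_injective
  have hg₀ : ¬∃ j, g j = e₀ := fun ⟨j, hj⟩ => j.2.1 hj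
  obtain ⟨ρ, hρ⟩ := exists_det_submatrix_ne_zero
    (hw.linearIndependent_submatrix_col hg (fun j => j.2.2) he₀ fun j => j.2.1)
  have hw_split : w = Pi.single e₀ (w e₀) + extend g (w ∘ g) 0 := by
    ext e'
    by_cases h₀ : e' = e₀
    · subst h₀; simp [extend_apply' _ _ _ hg₀]
    by_cases h₁ : w e' = 0
    · have : ¬∃ j, g j = e' := fun ⟨j, hj⟩ => j.2.2 (by rw [← hj] at h₁; exact h₁)
      simp [h₀, h₁, extend_apply' _ _ _ this]
    · simpa [h₀] using (hg.extend_apply (w ∘ g) 0 ⟨e', h₀, h₁⟩).symm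
  let x := -(w e₀)⁻¹ • (w ∘ g)
  have hx : A.submatrix ρ g *ᵥ x = fun k => A (ρ k) e₀ := by
    have hker : A *ᵥ w = 0 := hw.2.1
    rw [hw_split, mulVec_add, mulVec_single, mulVec_extend_zero A hg] at hker
    ext k
    have hrow : w e₀ * A (ρ k) e₀ + (A.submatrix id g *ᵥ w ∘ g) (ρ k) = 0 := by
      simpa using congrFun hker (ρ k)
    rw [mulVec_smul, Pi.smul_apply, smul_eq_mul]
    change -(w e₀)⁻¹ * (A.submatrix id g *ᵥ w ∘ g) (ρ k) = A (ρ k) e₀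
    rw [eq_neg_of_add_eq_zero_right hrow]
    field_simp
  obtain ⟨σ, hσ⟩ := hA.apply_mem_range_of_submatrix_mulVec_eq_col hρ hx ⟨e, he⟩
  refine ⟨-σ, ?_⟩
  rw [SignType.coe_neg, hσ]
  simp [x, g, div_eq_inv_mul]

end Matrix

theorem Matrix.map_mulVec_comp_eq_zero_iff {m n R S : Type*} [Fintype n] [NonAssocSemiring R]
    [NonAssocSemiring S] {f : R →+* S} (hf : Injective f) (A : Matrix m n R) (v : n → R) :
    A.map f *ᵥ (f ∘ v) = 0 ↔ A *ᵥ v = 0 := by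
  simp [funext_iff, ← RingHom.map_mulVec, map_eq_zero_iff f hf]

theorem sign_signType_cast (σ : SignType) : SignType.sign (σ : ℤ) = σ := by
  cases σ <;> rfl

theorem exists_isCircuit_conforms {r m : ℕ} {A : Matrix (Fin r) (Fin m) ℤ}
    (hA : A.IsTotallyUnimodular) {u : Fin m → ℤ} (hu : u ≠ 0) (hAu : A *ᵥ u = 0) :
    ∃ C, IsCircuit A C ∧ Conforms C u := by
  set f := Int.castRingHom ℚ
  have hf : Injective f := Int.cast_injective
  obtain ⟨w, hw, hwu⟩ := exists_isElementaryVector_conforms (A.map f) (u := f ∘ u)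
    ((hf.comp_left).ne hu) ((map_mulVec_comp_eq_zero_iff hf A u).mpr hAu)
  have ⟨hw0, hAw, hmin⟩ := hw
  obtain ⟨e₀, he₀⟩ := Function.ne_iff.mp hw0
  have habs : ∀ e, w e ≠ 0 → |w e| = |w e₀| := by
    intro e he
    obtain ⟨σ, hσ⟩ := hw.div_mem_range_signType_cast (hA.map f) he₀ e
    have h1 : |w e / w e₀| = 1 := by
      rw [← hσ]
      rcases σ.trichotomy with rfl | rfl | rfl
      · simp
      · exact absurd (by simpa using hσ.symm) (div_ne_zero he he₀)
      · simp
    rwa [abs_div, div_eq_one_iff_eq (abs_ne_zero.mpr he₀)] at h1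
  let C : Fin m → ℤ := fun e => SignType.sign (w e)
  have hsupp : support C = support w := by
    ext e
    change ((SignType.sign (w e) : ℤ)) ≠ 0 ↔ w e ≠ 0
    rw [← sign_ne_zero (a := w e)]
    cases SignType.sign (w e) <;> decide
  have hCw : f ∘ C = |w e₀|⁻¹ • w := by
    ext e
    by_cases he : w e = 0
    · simp [C, he]
    · simp only [Function.comp_apply, C, f, eq_intCast, SignType.intCast_cast, Pi.smul_apply,
        smul_eq_mul, ← habs e he]
      rw [eq_inv_mul_iff_mul_eq₀ (abs_ne_zero.mpr he), abs_mul_sign]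
  refine ⟨C, ⟨fun e => ?_, ?_, ?_, fun v hv hAv hvC => ?_⟩, fun e he => ?_⟩
  · rcases (SignType.sign (w e)).trichotomy with h | h | h <;> simp [C, h]
  · exact support_nonempty_iff.mp (hsupp ▸ ⟨e₀, he₀⟩)
  · rw [← map_mulVec_comp_eq_zero_iff hf, hCw, mulVec_smul, hAw, smul_zero]
  · have hvsupp : support (f ∘ v) = support v := support_comp_eq f (map_eq_zero_iff f hf) v
    have := hmin (f ∘ v) ((hf.comp_left).ne hv) ((map_mulVec_comp_eq_zero_iff hf A v).mpr hAv)
      (hvsupp ▸ hsupp ▸ hvC)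
    rwa [hvsupp, ← hsupp] at this
  · have := hwu e (show e ∈ support w from hsupp ▸ he)
    simp only [Function.comp_apply, f, eq_intCast, sign_intCast] at this
    rw [← this]
    exact sign_signType_cast _

theorem SignVec.abs_le_one {m : ℕ} {C : Fin m → ℤ} (h : SignVec C) (e : Fin m) : |C e| ≤ 1 := by
  rcases h e with h | h | h <;> simp [h]

theorem exists_sum_isCircuit_conforms {r m : ℕ} {A : Matrix (Fin r) (Fin m) ℤ}
    (hA : A.IsTotallyUnimodular) (u : Fin m → ℤ) (hAu : A *ᵥ u = 0) :
    ∃ (k : ℕ) (C : Fin k → Fin m → ℤ),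
      (∀ i, IsCircuit A (C i)) ∧ (∀ i, Conforms (C i) u) ∧ u = ∑ i, C i := by
  by_cases hu : u = 0
  · exact ⟨0, Fin.elim0, fun i => i.elim0, fun i => i.elim0, by simp [hu]⟩
  obtain ⟨C, hC, hCu⟩ := exists_isCircuit_conforms hA hu hAu
  have ⟨hCsign, hC0, hAC, _⟩ := hC
  have hrest : Conforms (u - C) u := conforms_sub_of_abs_le fun e => by
    by_cases he : C e = 0
    · simp [he]
    · exact (hCsign.abs_le_one e).trans (Int.one_le_abs (hCu.support_subset he))
  have habs : ∀ e, (u e).natAbs = (C e).natAbs + ((u - C) e).natAbs := fun e => by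
    have := abs_add_apply_of_conforms (x := C) (y := u - C) (by rwa [add_sub_cancel])
      (by rwa [add_sub_cancel]) e
    rw [add_sub_cancel, Int.abs_eq_natAbs, Int.abs_eq_natAbs, Int.abs_eq_natAbs] at this
    omega
  have hlt : ∑ e, ((u - C) e).natAbs < ∑ e, (u e).natAbs := by
    obtain ⟨e₀, he₀⟩ := Function.ne_iff.mp hC0
    refine Finset.sum_lt_sum (fun e _ => (habs e).symm ▸ Nat.le_add_left _ _)
      ⟨e₀, Finset.mem_univ _, ?_⟩
    rw [habs e₀]
    exact Nat.lt_add_of_pos_left (Int.natAbs_pos.mpr he₀)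
  obtain ⟨k, Cs, hCs, hCsu, hsum⟩ :=
    exists_sum_isCircuit_conforms hA (u - C) (by rw [mulVec_sub, hAu, hAC, sub_self])
  refine ⟨k + 1, Fin.cons C Cs, Fin.cases hC hCs, Fin.cases hCu fun i => (hCsu i).trans hrest, ?_⟩
  rw [Fin.sum_cons, ← hsum, add_sub_cancel]
termination_by ∑ e, (u e).natAbs

theorem stmt15_general {r m : ℕ} (A : Matrix (Fin r) (Fin m) ℤ) (hTU : A.IsTotallyUnimodular)
    (u : Fin m → ℤ) (hker : A.mulVec u = 0) :
    (∃ (k : ℕ) (lam : Fin k → ℤ) (C : Fin k → (Fin m → ℤ)),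
      (∀ i, 0 < lam i) ∧ (∀ i, IsCircuit A (C i)) ∧
      (∀ i e, C i e ≠ 0 → u e ≠ 0 ∧ Int.sign (C i e) = Int.sign (u e)) ∧
      u = ∑ i, lam i • C i) ∧
    (SignVec u → ∃ (k : ℕ) (C : Fin k → (Fin m → ℤ)),
      (∀ i, IsCircuit A (C i)) ∧
      (∀ i e, C i e ≠ 0 → u e ≠ 0 ∧ Int.sign (C i e) = Int.sign (u e)) ∧
      (∀ i j, i ≠ j → ∀ e, C i e ≠ 0 → C j e = 0) ∧
      u = ∑ i, C i) := by
  obtain ⟨k, C, hC, hCu, hsum⟩ := exists_sum_isCircuit_conforms hTU u hker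
  have hsign : ∀ i e, C i e ≠ 0 → u e ≠ 0 ∧ Int.sign (C i e) = Int.sign (u e) := fun i e he =>
    ⟨(hCu i).support_subset he, by rw [Int.sign_eq_sign, Int.sign_eq_sign, hCu i e he]⟩
  refine ⟨⟨k, fun _ => 1, C, fun _ => one_pos, hC, hsign, by simpa using hsum⟩,
    fun hu => ⟨k, C, hC, hsign, fun i j hij e he => ?_, hsum⟩⟩
  rw [hsum] at hCu hu
  exact eq_zero_of_conforms_sum hCu (hu.abs_le_one e) hij he

/-- Integral circuit decomposition: a nonzero integer kernel vector is a positive integral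
combination of signed circuits conformal to it; if moreover its entries lie in `{-1,0,1}`,
the circuits can be taken with coefficient `1` and pairwise disjoint supports. -/
theorem stmt15 {r m : ℕ} (A : Matrix (Fin r) (Fin m) ℤ) (hTU : A.IsTotallyUnimodular)
    (u : Fin m → ℤ) (hu : u ≠ 0) (hker : A.mulVec u = 0) :
    (∃ (k : ℕ) (lam : Fin k → ℤ) (C : Fin k → (Fin m → ℤ)),
      (∀ i, 0 < lam i) ∧ (∀ i, IsCircuit A (C i)) ∧
      (∀ i e, C i e ≠ 0 → u e ≠ 0 ∧ Int.sign (C i e) = Int.sign (u e)) ∧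
      u = ∑ i, lam i • C i) ∧
    (SignVec u → ∃ (k : ℕ) (C : Fin k → (Fin m → ℤ)),
      (∀ i, IsCircuit A (C i)) ∧
      (∀ i e, C i e ≠ 0 → u e ≠ 0 ∧ Int.sign (C i e) = Int.sign (u e)) ∧
      (∀ i j, i ≠ j → ∀ e, C i e ≠ 0 → C j e = 0) ∧
      u = ∑ i, C i) :=
  stmt15_general A hTU u hker
end

section
/- If O is a σ-compatible continuous orientation of M, then the set of elements bi-oriented with respect to O, namely {e ∈ E : −1 < O(e) < 1}, indexes a linearly independent set of columns of A (i.e., it is independent in M). -/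
open Matrix

/-- A continuous orientation: a function `E → [-1,1]`. -/
def ContOrientation {m : ℕ} (O : Fin m → ℝ) : Prop := ∀ e, O e ∈ Set.Icc (-1 : ℝ) 1

/-- Compatibility with a signed circuit: `O(e) ≠ -sign(C(e))` on the support of `C`. -/
def CompatC {m : ℕ} (C O : Fin m → ℝ) : Prop := ∀ e, C e ≠ 0 → O e ≠ -Real.sign (C e)

/-- `O` is σ-compatible (for the acyclic signature induced by `w`). -/
def SigmaCompat {r m : ℕ} (A : Matrix (Fin r) (Fin m) ℝ) (w : Fin m → ℝ)
    (O : Fin m → ℝ) : Prop :=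
  ∀ C : Fin m → ℝ, IsCircuitR A C → CompatC C O → 0 < w ⬝ᵥ C

lemma exists_circuit_aux {r m : ℕ} (A : Matrix (Fin r) (Fin m) ℝ) :
    ∀ n (v : Fin m → ℝ), (Finset.univ.filter fun e => v e ≠ 0).card = n →
      v ≠ 0 → A.mulVec v = 0 →
      ∃ C, IsCircuitR A C ∧ {e | C e ≠ 0} ⊆ {e | v e ≠ 0} := by
  intro n
  induction n using Nat.strong_induction_on with
  | _ n ih =>
    intro v hcard hv0 hAv
    by_cases hmin : ∀ u : Fin m → ℝ, u ≠ 0 → A.mulVec u = 0 →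
        {e | u e ≠ 0} ⊆ {e | v e ≠ 0} → {e | u e ≠ 0} = {e | v e ≠ 0}
    · exact ⟨v, ⟨hv0, hAv, hmin⟩, subset_rfl⟩
    · push_neg at hmin
      obtain ⟨u, hu0, hAu, hsub, hne⟩ := hmin
      have hfsub : (Finset.univ.filter fun e => u e ≠ 0) ⊂
          (Finset.univ.filter fun e => v e ≠ 0) := by
        constructor
        · intro e he
          simp only [Finset.mem_filter, Finset.mem_univ, true_and] at he ⊢
          exact hsub he
        · intro hcon
          apply hne
          ext e
          simp only [Set.mem_setOf_eq]
          constructor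
          · exact fun h => hsub h
          · intro h
            have := hcon (Finset.mem_filter.mpr ⟨Finset.mem_univ e, h⟩)
            exact (Finset.mem_filter.mp this).2
      have hlt : (Finset.univ.filter fun e => u e ≠ 0).card < n := by
        rw [← hcard]; exact Finset.card_lt_card hfsub
      obtain ⟨C, hC, hCsub⟩ := ih _ hlt u rfl hu0 hAu
      exact ⟨C, hC, hCsub.trans hsub⟩

/-- If `O` is a σ-compatible continuous orientation, then the set of bi-oriented elements
`{e : -1 < O(e) < 1}` indexes a linearly independent set of columns of `A`. -/
theorem stmt16 {r m : ℕ} (A : Matrix (Fin r) (Fin m) ℝ) (hrank : A.rank = r)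
    (w : Fin m → ℝ) (hw : ∀ C : Fin m → ℝ, IsCircuitR A C → w ⬝ᵥ C ≠ 0)
    (O : Fin m → ℝ) (hO : ContOrientation O) (hcompat : SigmaCompat A w O) :
    LinearIndependent ℝ
      (fun e : {e : Fin m // -1 < O e ∧ O e < 1} => fun i => A i (e : Fin m)) := by
  by_contra hdep
  rw [Fintype.not_linearIndependent_iff] at hdep
  obtain ⟨g, hg, i0, hi0⟩ := hdep
  set v : Fin m → ℝ := fun e => if h : -1 < O e ∧ O e < 1 then g ⟨e, h⟩ else 0 with hv
  have hv0 : v ≠ 0 := by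
    intro h
    apply hi0
    have := congrFun h i0.1
    simpa [hv, i0.2] using this
  have hAv : A.mulVec v = 0 := by
    funext i
    have hgi := congrFun hg i
    simp only [Finset.sum_apply, Pi.smul_apply, smul_eq_mul, Pi.zero_apply] at hgi
    simp only [Pi.zero_apply]
    rw [mulVec, dotProduct]
    rw [← Finset.sum_filter_of_ne (p := fun e => -1 < O e ∧ O e < 1)
      (by intro e _ h; by_contra hc; simp [hv, hc] at h)]
    rw [← Finset.sum_subtype_eq_sum_filter, ← hgi]
    rw [Finset.subtype_univ]
    apply Finset.sum_congr rfl
    intro c _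
    simp [hv, c.2, mul_comm]
  have hsupp : {e | v e ≠ 0} ⊆ {e | -1 < O e ∧ O e < 1} := by
    intro e he
    simp only [Set.mem_setOf_eq, hv] at he ⊢
    by_contra h
    simp [h] at he
  obtain ⟨C, hC, hCsub⟩ := exists_circuit_aux A _ v rfl hv0 hAv
  have hcomp : ∀ C' : Fin m → ℝ, {e | C' e ≠ 0} ⊆ {e | v e ≠ 0} → CompatC C' O := by
    intro C' hsub e he
    have hmem := hsupp (hsub he)
    simp only [Set.mem_setOf_eq] at hmem
    have hsign : Real.sign (C' e) = 1 ∨ Real.sign (C' e) = -1 := by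
      rcases lt_or_gt_of_ne he with h | h
      · right; exact Real.sign_of_neg h
      · left; exact Real.sign_of_pos h
    rcases hsign with h | h <;> rw [h] <;> intro hcon <;> rw [hcon] at hmem <;>
      [exact absurd hmem.1 (by norm_num); exact absurd hmem.2 (by norm_num)]
  have hCneg : IsCircuitR A (-C) := by
    obtain ⟨h1, h2, h3⟩ := hC
    refine ⟨by simpa using h1, by simpa [Matrix.mulVec_neg] using h2, ?_⟩
    intro u hu hAu hsub
    have : {e | (-C) e ≠ 0} = {e | C e ≠ 0} := by ext e; simp
    rw [this] at hsub ⊢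
    exact h3 u hu hAu hsub
  have hsuppneg : {e | (-C) e ≠ 0} = {e | C e ≠ 0} := by ext e; simp
  have h1 := hcompat C hC (hcomp C hCsub)
  have h2 := hcompat (-C) hCneg (hcomp (-C) (by rw [hsuppneg]; exact hCsub))
  rw [dotProduct_neg] at h2
  linarith
end

section
/- Let B be a basis of A and let b : B → (−1,1) be any function. Then there exists a unique σ-compatible continuous orientation O of M such that O(e) = b(e) for all e ∈ B and O(e) ∈ {−1, 1} for all e ∉ B. -/
open Matrix

/-- `B ⊆ E` is a basis of `A`: the columns indexed by `B` form a basis of `ℝ^r`. -/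
def IsBasisR {r m : ℕ} (A : Matrix (Fin r) (Fin m) ℝ) (B : Finset (Fin m)) : Prop :=
  LinearIndependent ℝ (fun e : B => fun i => A i (e : Fin m)) ∧
  Submodule.span ℝ (Set.range (fun e : B => fun i => A i (e : Fin m))) = ⊤

/- ### Auxiliary lemmas -/

/-- A kernel vector supported inside the basis `B` is zero. -/
lemma kerZero {r m : ℕ} (A : Matrix (Fin r) (Fin m) ℝ) (B : Finset (Fin m))
    (hB : LinearIndependent ℝ (fun e : B => fun i => A i (e : Fin m)))
    (v : Fin m → ℝ) (hv : A.mulVec v = 0) (hs : ∀ f ∉ B, v f = 0) : v = 0 := by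
  have hli := Fintype.linearIndependent_iff.mp hB (fun e : B => v e) ?_
  · funext f
    by_cases hf : f ∈ B
    · exact hli ⟨f, hf⟩
    · exact hs f hf
  · funext i
    have h1 : (∑ e : B, v e • fun i => A i (e : Fin m)) i
        = ∑ e : B, v e * A i (e : Fin m) := by simp
    rw [h1]
    have h2 : ∑ e : B, v (e : Fin m) * A i (e : Fin m)
        = ∑ e ∈ B, v e * A i e := by
      rw [← Finset.sum_attach B (fun e => v e * A i e)]
      rfl
    rw [h2]
    have h3 : ∑ e ∈ B, v e * A i e = ∑ e : Fin m, v e * A i e := by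
      apply Finset.sum_subset (Finset.subset_univ B)
      intro x _ hx
      simp [hs x hx]
    rw [h3]
    have := congrFun hv i
    simpa [Matrix.mulVec, dotProduct, mul_comm] using this

/-- Existence of the fundamental circuit of `e ∉ B`. -/
lemma fundExists {r m : ℕ} (A : Matrix (Fin r) (Fin m) ℝ) (B : Finset (Fin m))
    (hsp : Submodule.span ℝ (Set.range (fun e : B => fun i => A i (e : Fin m))) = ⊤)
    {e : Fin m} (he : e ∉ B) :
    ∃ C : Fin m → ℝ, A.mulVec C = 0 ∧ C e = 1 ∧ ∀ f, f ∉ B → f ≠ e → C f = 0 := by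
  have hmem : (fun i => A i e) ∈ Submodule.span ℝ
      (Set.range (fun e : B => fun i => A i (e : Fin m))) := by
    rw [hsp]; trivial
  obtain ⟨c, hc⟩ := (Submodule.mem_span_range_iff_exists_fun ℝ).mp hmem
  classical
  set c' : Fin m → ℝ := fun f => if h : f ∈ B then c ⟨f, h⟩ else 0 with hc'
  refine ⟨fun f => if f = e then 1 else -c' f, ?_, by simp, ?_⟩
  · funext i
    have hce : ∑ f : Fin m, c' f * A i f = A i e := by
      have h1 : ∑ f : Fin m, c' f * A i f = ∑ f ∈ B, c' f * A i f := by
        symm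
        apply Finset.sum_subset (Finset.subset_univ B)
        intro x _ hx
        simp [hc', hx]
      have h2 : ∑ f ∈ B, c' f * A i f = ∑ f : B, c f * A i (f : Fin m) := by
        rw [← Finset.sum_attach B (fun f => c' f * A i f)]
        apply Finset.sum_congr rfl
        intro x _
        simp [hc', x.2]
      have h3 := congrFun hc i
      simp only [Finset.sum_apply, Pi.smul_apply, smul_eq_mul] at h3
      rw [h1, h2, h3]
    have hsupp : ∀ f : Fin m, f ∉ insert e B →
        A i f * (if f = e then 1 else -c' f) = 0 := by
      intro f hf
      simp only [Finset.mem_insert, not_or] at hf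
      simp [hf.1, hc', hf.2]
    calc A.mulVec (fun f => if f = e then 1 else -c' f) i
        = ∑ f : Fin m, A i f * (if f = e then 1 else -c' f) := by
          simp [Matrix.mulVec, dotProduct]
      _ = ∑ f ∈ insert e B, A i f * (if f = e then 1 else -c' f) := by
          symm; apply Finset.sum_subset (Finset.subset_univ _) (fun x _ hx => hsupp x hx)
      _ = A i e * 1 + ∑ f ∈ B, A i f * (if f = e then 1 else -c' f) := by
          rw [Finset.sum_insert he]; simp
      _ = A i e - ∑ f ∈ B, c' f * A i f := by
          have hcg : ∀ f ∈ B, A i f * (if f = e then 1 else -c' f) = -(c' f * A i f) := by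
            intro f hf
            have hne : f ≠ e := fun h => he (h ▸ hf)
            simp only [if_neg hne]
            ring
          rw [Finset.sum_congr rfl hcg, Finset.sum_neg_distrib]
          ring
      _ = 0 := by
          rw [show ∑ f ∈ B, c' f * A i f = ∑ f : Fin m, c' f * A i f by
            apply Finset.sum_subset (Finset.subset_univ B)
            intro x _ hx; simp [hc', hx], hce]
          simp [Pi.zero_apply]
  · intro f hf hfe
    simp [hfe, hc', hf]

/-- The fundamental circuit is indeed a circuit. -/
lemma fundCircuit {r m : ℕ} (A : Matrix (Fin r) (Fin m) ℝ) (B : Finset (Fin m))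
    (hli : LinearIndependent ℝ (fun e : B => fun i => A i (e : Fin m)))
    {e : Fin m} (he : e ∉ B) (C : Fin m → ℝ)
    (h0 : A.mulVec C = 0) (h1 : C e = 1) (h2 : ∀ f, f ∉ B → f ≠ e → C f = 0) :
    IsCircuitR A C := by
  refine ⟨fun h => by simpa [h] using h1.symm, h0, ?_⟩
  intro v hv hv0 hsub
  have hve : v e ≠ 0 := by
    intro hve0
    apply hv
    apply kerZero A B hli v hv0
    intro f hf
    by_cases hfe : f = e
    · rw [hfe]; exact hve0
    · by_contra hvf
      exact hvf (by
        have : C f = 0 := h2 f hf hfe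
        by_contra hne
        exact (hsub hne) this)
  have hu : (fun f => v f - v e * C f) = 0 := by
    apply kerZero A B hli _ ?_ ?_
    · have := Matrix.mulVec_sub A v (v e • C)
      have h2' : A.mulVec (v e • C) = v e • A.mulVec C := Matrix.mulVec_smul A (v e) C
      funext i
      have hx : (fun f => v f - v e * C f) = v - v e • C := by
        funext f; simp [Pi.sub_apply]
      rw [hx, this]
      simp [h2', h0, hv0]
    · intro f hf
      by_cases hfe : f = e
      · subst hfe; simp [h1]
      · have hc : C f = 0 := h2 f hf hfe
        have hvf : v f = 0 := by
          by_contra hne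
          exact (hsub hne) hc
        simp [hc, hvf]
  have hveq : ∀ f, v f = v e * C f := by
    intro f
    have := congrFun hu f
    simpa [sub_eq_zero] using this
  ext f
  simp only [Set.mem_setOf_eq]
  rw [hveq f]
  constructor
  · intro h hc; exact h (by simp [hc])
  · intro h; exact mul_ne_zero hve h

/-- Nonzero scalar multiples of circuits are circuits. -/
lemma circuitSmul {r m : ℕ} (A : Matrix (Fin r) (Fin m) ℝ) (C : Fin m → ℝ)
    (c : ℝ) (hc : c ≠ 0) (h : IsCircuitR A C) : IsCircuitR A (c • C) := by
  obtain ⟨h1, h2, h3⟩ := h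
  have hsupp : {e | (c • C) e ≠ 0} = {e | C e ≠ 0} := by
    ext f
    simp [Pi.smul_apply, smul_eq_mul, mul_ne_zero_iff, hc]
  refine ⟨?_, ?_, ?_⟩
  · intro hC0
    apply h1
    funext f
    have := congrFun hC0 f
    simp only [Pi.smul_apply, smul_eq_mul, Pi.zero_apply] at this
    exact (mul_eq_zero.mp this).resolve_left hc
  · rw [Matrix.mulVec_smul, h2]; simp
  · intro v hv hv0 hsub
    rw [hsupp] at hsub ⊢
    exact h3 v hv hv0 hsub

/-- Dot product with a finite sum. -/
lemma dotSum {m : ℕ} {ι : Type*} (w : Fin m → ℝ) (s : Finset ι) (f : ι → Fin m → ℝ) :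
    w ⬝ᵥ (∑ e ∈ s, f e) = ∑ e ∈ s, w ⬝ᵥ f e := by
  simp only [dotProduct, Finset.sum_apply, Finset.mul_sum]
  rw [Finset.sum_comm]

/-- Decomposition of a kernel vector in terms of fundamental circuits. -/
lemma kerDecomp {r m : ℕ} (A : Matrix (Fin r) (Fin m) ℝ) (B : Finset (Fin m))
    (hli : LinearIndependent ℝ (fun e : B => fun i => A i (e : Fin m)))
    (C : Fin m → Fin m → ℝ)
    (hC : ∀ e ∉ B, A.mulVec (C e) = 0 ∧ C e e = 1 ∧ ∀ f, f ∉ B → f ≠ e → C e f = 0)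
    (v : Fin m → ℝ) (hv : A.mulVec v = 0) :
    v = ∑ e ∈ Bᶜ, v e • C e := by
  classical
  have hX : v - ∑ e ∈ Bᶜ, v e • C e = 0 := by
    apply kerZero A B hli
    · rw [Matrix.mulVec_sub, hv]
      have : A.mulVec (∑ e ∈ Bᶜ, v e • C e) = 0 := by
        have h1 : A.mulVec (∑ e ∈ Bᶜ, v e • C e)
            = A.mulVecLin (∑ e ∈ Bᶜ, v e • C e) := rfl
        rw [h1, map_sum]
        apply Finset.sum_eq_zero
        intro e heB
        rw [_root_.map_smul]
        have : A.mulVecLin (C e) = 0 := (hC e (Finset.mem_compl.mp heB)).1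
        rw [this]; simp
      rw [this]; simp
    · intro f hf
      have hfB : f ∈ Bᶜ := Finset.mem_compl.mpr hf
      have hsum : ∑ e ∈ Bᶜ, v e * C e f = v f := by
        rw [Finset.sum_eq_single_of_mem f hfB]
        · rw [(hC f hf).2.1, mul_one]
        · intro g hg hgf
          rw [(hC g (Finset.mem_compl.mp hg)).2.2 f hf (Ne.symm hgf), mul_zero]
      simp only [Pi.sub_apply, Finset.sum_apply, Pi.smul_apply, smul_eq_mul]
      rw [hsum]; ring
  funext f
  have := congrFun hX f
  simp only [Pi.sub_apply, Pi.zero_apply, sub_eq_zero] at this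
  exact this

lemma signCases {x : ℝ} (hx : x ≠ 0) : Real.sign x = 1 ∨ Real.sign x = -1 := by
  rcases lt_trichotomy x 0 with h | h | h
  · right; exact Real.sign_of_neg h
  · exact absurd h hx
  · left; exact Real.sign_of_pos h

lemma signMulPos {x : ℝ} (hx : x ≠ 0) : 0 < Real.sign x * x := by
  rcases lt_trichotomy x 0 with h | h | h
  · rw [Real.sign_of_neg h]; nlinarith
  · exact absurd h hx
  · rw [Real.sign_of_pos h]; nlinarith

lemma pmOneEq {a c : ℝ} (ha : a = 1 ∨ a = -1) (hc : c = 1 ∨ c = -1) (h : a ≠ -c) :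
    a = c := by
  rcases ha with ha | ha <;> rcases hc with hc | hc <;> subst ha <;> subst hc <;>
    first | rfl | (exfalso; apply h; norm_num)

/-- Given a basis `B` and prescribed values `b : B → (-1,1)`, there is a unique
σ-compatible continuous orientation agreeing with `b` on `B` and taking values in
`{-1,1}` outside `B`. -/
theorem stmt17 {r m : ℕ} (A : Matrix (Fin r) (Fin m) ℝ) (hrank : A.rank = r)
    (w : Fin m → ℝ) (hw : ∀ C : Fin m → ℝ, IsCircuitR A C → w ⬝ᵥ C ≠ 0)
    (B : Finset (Fin m)) (hB : IsBasisR A B)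
    (b : Fin m → ℝ) (hb : ∀ e ∈ B, b e ∈ Set.Ioo (-1 : ℝ) 1) :
    ∃! O : Fin m → ℝ, ContOrientation O ∧ SigmaCompat A w O ∧
      (∀ e ∈ B, O e = b e) ∧ (∀ e ∉ B, O e = 1 ∨ O e = -1) := by
  classical
  obtain ⟨hli, hsp⟩ := hB
  -- choose fundamental circuits
  have hex : ∀ e : Fin m, ∃ C : Fin m → ℝ, e ∉ B →
      (A.mulVec C = 0 ∧ C e = 1 ∧ ∀ f, f ∉ B → f ≠ e → C f = 0) := by
    intro e
    by_cases he : e ∈ B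
    · exact ⟨0, fun h => absurd he h⟩
    · obtain ⟨C, h⟩ := fundExists A B hsp he
      exact ⟨C, fun _ => h⟩
  choose C0 hC0 using hex
  have hcirc : ∀ e ∉ B, IsCircuitR A (C0 e) := by
    intro e he
    obtain ⟨h0, h1, h2⟩ := hC0 e he
    exact fundCircuit A B hli he (C0 e) h0 h1 h2
  have hwC : ∀ e ∉ B, w ⬝ᵥ C0 e ≠ 0 := fun e he => hw (C0 e) (hcirc e he)
  set s : Fin m → ℝ := fun e => Real.sign (w ⬝ᵥ C0 e) with hs
  set O : Fin m → ℝ := fun e => if e ∈ B then b e else s e with hO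
  have hspm : ∀ e ∉ B, s e = 1 ∨ s e = -1 := fun e he => signCases (hwC e he)
  have hsw : ∀ e ∉ B, 0 < s e * (w ⬝ᵥ C0 e) := fun e he => signMulPos (hwC e he)
  -- key: value of sigma-compatible orientation off B is forced
  have hdot : ∀ v : Fin m → ℝ, A.mulVec v = 0 →
      w ⬝ᵥ v = ∑ e ∈ Bᶜ, v e * (w ⬝ᵥ C0 e) := by
    intro v hv
    have := kerDecomp A B hli C0 hC0 v hv
    calc w ⬝ᵥ v = w ⬝ᵥ (∑ e ∈ Bᶜ, v e • C0 e) := by rw [← this]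
      _ = ∑ e ∈ Bᶜ, w ⬝ᵥ (v e • C0 e) := dotSum w Bᶜ _
      _ = ∑ e ∈ Bᶜ, v e * (w ⬝ᵥ C0 e) := by
          apply Finset.sum_congr rfl
          intro e _
          rw [dotProduct_smul]
          simp
  refine ⟨O, ⟨?_, ?_, ?_, ?_⟩, ?_⟩
  · -- continuous orientation
    intro e
    by_cases he : e ∈ B
    · have := hb e he
      simp only [hO, if_pos he]
      exact ⟨le_of_lt this.1, le_of_lt this.2⟩
    · rcases hspm e he with h | h <;> simp [hO, if_neg he, h]
  · -- sigma-compatibility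
    intro Cc hCc hcompat
    have hdecomp := hdot Cc hCc.2.1
    rw [hdecomp]
    -- each term nonneg
    have hterm : ∀ e ∈ Bᶜ, 0 ≤ Cc e * (w ⬝ᵥ C0 e) := by
      intro e heB
      have he : e ∉ B := Finset.mem_compl.mp heB
      by_cases hce : Cc e = 0
      · simp [hce]
      · have hOc := hcompat e hce
        have hOe : O e = s e := by simp [hO, if_neg he]
        rw [hOe] at hOc
        have hsigneq : s e = Real.sign (Cc e) :=
          pmOneEq (hspm e he) (signCases hce) hOc
        have h1 : 0 < Real.sign (Cc e) * Cc e := signMulPos hce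
        have h2 := hsw e he
        rw [hsigneq] at h2
        rcases signCases hce with h | h <;> rw [h] at h1 h2 <;> nlinarith
    have hne : ∃ e ∈ Bᶜ, Cc e ≠ 0 := by
      by_contra hcon
      push_neg at hcon
      apply hCc.1
      apply kerZero A B hli Cc hCc.2.1
      intro f hf
      exact hcon f (Finset.mem_compl.mpr hf)
    obtain ⟨e, heB, hce⟩ := hne
    apply Finset.sum_pos' hterm
    refine ⟨e, heB, ?_⟩
    have he : e ∉ B := Finset.mem_compl.mp heB
    have hOc := hcompat e hce
    have hOe : O e = s e := by simp [hO, if_neg he]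
    rw [hOe] at hOc
    have hsigneq : s e = Real.sign (Cc e) := pmOneEq (hspm e he) (signCases hce) hOc
    have h1 : 0 < Real.sign (Cc e) * Cc e := signMulPos hce
    have h2 := hsw e he
    rw [hsigneq] at h2
    rcases signCases hce with h | h <;> rw [h] at h1 h2 <;> nlinarith
  · -- agrees with b on B
    intro e he
    simp [hO, if_pos he]
  · -- values ±1 off B
    intro e he
    rcases hspm e he with h | h <;> simp [hO, if_neg he, h]
  · -- uniqueness
    rintro O' ⟨hO'1, hO'2, hO'3, hO'4⟩
    funext e
    by_cases he : e ∈ B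
    · rw [hO'3 e he]; simp [hO, if_pos he]
    · have hOe : O e = s e := by simp [hO, if_neg he]
      rw [hOe]
      by_contra hne
      have hO'val : O' e = -s e := by
        rcases hO'4 e he with h | h <;> rcases hspm e he with h2 | h2
        · exact absurd (h.trans h2.symm) hne
        · simp [h, h2]
        · simp [h, h2]
        · exact absurd (h.trans h2.symm) hne
      -- the circuit (-s e) • C0 e is compatible with O' but has negative weight
      have hsne : s e ≠ 0 := by rcases hspm e he with h | h <;> rw [h] <;> norm_num
      have hcircD : IsCircuitR A ((-s e) • C0 e) :=
        circuitSmul A (C0 e) (-s e) (neg_ne_zero.mpr hsne) (hcirc e he)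
      have hcompatD : CompatC ((-s e) • C0 e) O' := by
        intro f hf
        simp only [Pi.smul_apply, smul_eq_mul, ne_eq, mul_eq_zero, not_or] at hf
        by_cases hfB : f ∈ B
        · rw [hO'3 f hfB]
          have hbf := hb f hfB
          have hD : ((-s e) • C0 e) f ≠ 0 := by
            simp only [Pi.smul_apply, smul_eq_mul]
            exact mul_ne_zero hf.1 hf.2
          rcases signCases hD with h | h
          · rw [h]; intro hcon; linarith [hbf.1]
          · rw [h]; intro hcon; linarith [hbf.2]
        · have hfe : f = e := by
            by_contra hfe
            exact hf.2 ((hC0 e he).2.2 f hfB hfe)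
          have hD : ((-s e) • C0 e) e = -s e := by
            simp [(hC0 e he).2.1]
          have hsgn : Real.sign (-s e) = -s e := by
            rw [Real.sign_neg]
            rcases hspm e he with h | h
            · rw [h, Real.sign_one]
            · rw [h]
              rw [show Real.sign (-1 : ℝ) = -1 from Real.sign_of_neg (by norm_num)]
          rw [hfe, hO'val, hD, hsgn]
          intro hcon
          exact hsne (by linarith)
      have hpos := hO'2 _ hcircD hcompatD
      have hDdot : w ⬝ᵥ ((-s e) • C0 e) = -(s e * (w ⬝ᵥ C0 e)) := by
        rw [dotProduct_smul]
        simp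
      rw [hDdot] at hpos
      have := hsw e he
      linarith
end

section
/- Let B be a basis of A. Then there exists ε₀ > 0 such that for all ε with 0 < ε < ε₀, the shifted cell Z(B) + εAw = {z + εAw : z ∈ Z(B)} contains exactly one point of the form ψ(O) with O a σ-compatible discrete orientation of M; that is, the shifted cell contains a unique point corresponding to a σ-compatible discrete orientation. -/
open Matrix

/-- A signed cocircuit of a real matrix `A`. -/
def IsCocircuitR {r m : ℕ} (A : Matrix (Fin r) (Fin m) ℝ) (D : Fin m → ℝ) : Prop :=
  D ≠ 0 ∧ (∃ y : Fin r → ℝ, D = Matrix.vecMul y A) ∧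
    ∀ v : Fin m → ℝ, v ≠ 0 → (∃ y : Fin r → ℝ, v = Matrix.vecMul y A) →
      {e | v e ≠ 0} ⊆ {e | D e ≠ 0} → {e | v e ≠ 0} = {e | D e ≠ 0}

/-- A discrete orientation: a function `E → {-1,1}`. -/
def IsOrientationR {m : ℕ} (O : Fin m → ℝ) : Prop := ∀ e, O e = 1 ∨ O e = -1

/-- `O` is σ-compatible: every signed circuit compatible with `O` satisfies `w·C > 0`. -/
def SigmaCompatR {r m : ℕ} (A : Matrix (Fin r) (Fin m) ℝ) (w : Fin m → ℝ)
    (O : Fin m → ℝ) : Prop :=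
  ∀ C : Fin m → ℝ, IsCircuitR A C → (∀ e, C e ≠ 0 → O e = Real.sign (C e)) → 0 < w ⬝ᵥ C

/-- `ψ(O) = A·((O+1)/2)`. -/
noncomputable def psiR {r m : ℕ} (A : Matrix (Fin r) (Fin m) ℝ) (O : Fin m → ℝ) :
    Fin r → ℝ :=
  A.mulVec (fun e => (O e + 1) / 2)

/-- The fundamental circuit of `e ∉ B` with respect to a basis `B`, normalized so that its
`e`-th entry is `1`. -/
def FundCircuitR {r m : ℕ} (A : Matrix (Fin r) (Fin m) ℝ) (B : Finset (Fin m)) (e : Fin m)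
    (C : Fin m → ℝ) : Prop :=
  IsCircuitR A C ∧ (∀ f, C f ≠ 0 → f ∈ B ∨ f = e) ∧ C e = 1

/-- The closed cell `Z(B)` of the zonotopal subdivision determined by `w`. -/
def ZB {r m : ℕ} (A : Matrix (Fin r) (Fin m) ℝ) (w : Fin m → ℝ) (B : Finset (Fin m)) :
    Set (Fin r → ℝ) :=
  {z | ∃ x : Fin m → ℝ, (∀ e, x e ∈ Set.Icc (0 : ℝ) 1) ∧
    (∀ e ∉ B, ∀ C : Fin m → ℝ, FundCircuitR A B e C →
      (0 < w ⬝ᵥ C → x e = 1) ∧ (w ⬝ᵥ C < 0 → x e = 0)) ∧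
    z = A.mulVec x}

/-!
The point of the cell is `ψ(O*)`, where `O*` orients each `f ∈ B` as `w` orients the fundamental
cocircuit `D_f` and each `e ∉ B` as `w` orients the fundamental circuit `C_e`. Modulo `ker A`, `w`
agrees with the vector `w̃` supported on `B` with `w̃ f = w · D_f`, and `ψ(O*) - ε A w̃` lies in
`Z(B)` once `ε |w · D_f| ≤ 1`; `O*` is σ-compatible because `w · C = ∑_{e ∉ B} C e (w · C_e)` for
every circuit `C`.

Conversely, let `ψ(O) = A x + ε A w` with `O` σ-compatible and `x` as in `Z(B)`. The kernel vector
`k = (O + 1) / 2 - x - ε w̃` equals `(O - O*) / 2` off `B`; there are finitely many such kernel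
vectors, so the nonzero entries of `k` are bounded away from `0`, and for small `ε` this forces
`O = sign k` on the support of `k`. Every circuit conformal to `k` is then compatible with `O`,
hence of positive weight, so `w · k ≥ 0`; but expanding `k` in fundamental circuits gives
`w · k < 0` unless `k = 0`. Finally `k = 0` leaves `O = O*`.
-/

open Function

lemma Real.mul_pos_iff_sign_eq {a b : ℝ} (ha : a ≠ 0) : 0 < a * b ↔ Real.sign a = Real.sign b := by
  rcases ha.lt_or_gt with ha | ha <;> rcases lt_trichotomy b 0 with hb | rfl | hb
  · simp [Real.sign_of_neg, mul_pos_of_neg_of_neg, *]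
  · simp [Real.sign_of_neg, ha]
  · simp only [Real.sign_of_neg ha, Real.sign_of_pos hb]; norm_num; nlinarith
  · simp only [Real.sign_of_neg hb, Real.sign_of_pos ha]; norm_num; nlinarith
  · simp [Real.sign_of_pos, ha]
  · simp [Real.sign_of_pos, *]

lemma eq_sign_of_abs_sub_lt {o x d : ℝ} (ho : o = 1 ∨ o = -1) (hx : x ∈ Set.Icc 0 1)
    (hd : |(o + 1) / 2 - x - d| < |d|) : o = Real.sign d := by
  obtain ⟨hx0, hx1⟩ := hx
  rcases lt_trichotomy d 0 with hd0 | rfl | hd0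
  · rw [Real.sign_of_neg hd0]
    rcases ho with rfl | rfl
    · rw [abs_of_neg hd0, abs_of_nonneg (by linarith)] at hd
      linarith
    · rfl
  · simp at hd
    exact absurd hd (not_lt.2 (abs_nonneg _))
  · rw [Real.sign_of_pos hd0]
    rcases ho with rfl | rfl
    · rfl
    · rw [abs_of_pos hd0, abs_of_nonpos (by linarith)] at hd
      linarith

lemma sign_add_one_div_two_sub_mem_Icc {ε : ℝ} (a : ℝ) (hε : 0 ≤ ε) (h : ε * |a| ≤ 1) :
    (Real.sign a + 1) / 2 - ε * a ∈ Set.Icc 0 1 := by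
  rcases lt_trichotomy a 0 with ha | rfl | ha
  · rw [Real.sign_of_neg ha, abs_of_neg ha] at *
    constructor <;> nlinarith
  · norm_num
  · rw [Real.sign_of_pos ha, abs_of_pos ha] at *
    constructor <;> nlinarith

lemma sign_sub_div_two_mul_pos {o a : ℝ} (ho : o = 1 ∨ o = -1) (ha : a ≠ 0)
    (h : (Real.sign a - o) / 2 ≠ 0) : 0 < (Real.sign a - o) / 2 * a := by
  rcases ha.lt_or_gt with ha | ha
  · rw [Real.sign_of_neg ha] at h ⊢
    rcases ho with rfl | rfl
    · linarith
    · norm_num at h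
  · rw [Real.sign_of_pos ha] at h ⊢
    rcases ho with rfl | rfl
    · norm_num at h
    · linarith

open Filter Topology in
lemma eventually_mul_abs_lt (a : ℝ) {c : ℝ} (hc : 0 < c) : ∀ᶠ ε in 𝓝 (0 : ℝ), ε * |a| < c :=
  ((continuous_id.mul continuous_const).tendsto' 0 0 (by simp)).eventually_lt_const hc

lemma sub_div_two_mem {o o' : ℝ} (ho : o = 1 ∨ o = -1) (ho' : o' = 1 ∨ o' = -1) :
    (o - o') / 2 ∈ ({-1, 0, 1} : Set ℝ) := by
  rcases ho with rfl | rfl <;> rcases ho' with rfl | rfl <;> norm_num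

section Conformal

variable {ι : Type*}

def IsConformal (v k : ι → ℝ) : Prop := ∀ i, v i ≠ 0 → 0 < v i * k i

lemma isConformal_self (k : ι → ℝ) : IsConformal k k := fun _ hk => mul_self_pos.2 hk

namespace IsConformal

variable {u v k : ι → ℝ}

lemma support_subset (h : IsConformal v k) : support v ⊆ support k := fun i hi hk => by
  simpa [hk] using h i hi

lemma trans (huv : IsConformal u v) (hvk : IsConformal v k) : IsConformal u k := fun i hi => by
  have huv' := huv i hi
  have hvk' := hvk i (right_ne_zero_of_mul huv'.ne')
  have hvv : 0 < v i * v i := mul_self_pos.2 (right_ne_zero_of_mul huv'.ne')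
  nlinarith [mul_pos huv' hvk']

end IsConformal

lemma exists_sub_smul_isConformal [Fintype ι] {v k : ι → ℝ} (hsupp : support v ⊆ support k)
    (hpos : ∃ i, 0 < v i * k i) :
    ∃ t : ℝ, 0 < t ∧ IsConformal (k - t • v) k ∧ support (k - t • v) ⊂ support k := by
  classical
  -- `t` is the least ratio `k i / v i` over the coordinates where `v` and `k` agree in sign
  obtain ⟨i₀, hi₀, hmin⟩ := (Finset.univ.filter fun i => 0 < v i * k i).exists_min_image
    (fun i => k i / v i) (by simpa [Finset.Nonempty] using hpos)
  simp only [Finset.mem_filter, Finset.mem_univ, true_and] at hi₀ hmin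
  have hv₀ : v i₀ ≠ 0 := left_ne_zero_of_mul hi₀.ne'
  have ht : 0 < k i₀ / v i₀ := by
    have := div_pos hi₀ (mul_self_pos.2 hv₀)
    rwa [mul_div_mul_left _ _ hv₀] at this
  have hconf : IsConformal (k - (k i₀ / v i₀) • v) k := by
    intro i hi
    simp only [Pi.sub_apply, Pi.smul_apply, smul_eq_mul] at hi ⊢
    by_cases hvi : v i = 0
    · simp only [hvi, mul_zero, sub_zero] at hi ⊢
      exact mul_self_pos.2 hi
    have hki : k i ≠ 0 := hsupp hvi
    rcases lt_or_gt_of_ne (mul_ne_zero hvi hki) with hneg | hpos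
    · nlinarith [mul_self_pos.2 hki]
    · have hle : k i₀ / v i₀ * (v i * k i) ≤ k i / v i * (v i * k i) :=
        mul_le_mul_of_nonneg_right (hmin i hpos) hpos.le
      rw [show k i / v i * (v i * k i) = k i * k i by field_simp] at hle
      exact lt_of_le_of_ne (by nlinarith) (mul_ne_zero hi hki).symm
  refine ⟨_, ht, hconf, (Set.ssubset_iff_of_subset hconf.support_subset).2
    ⟨i₀, hsupp hv₀, ?_⟩⟩
  simp [div_mul_cancel₀ _ hv₀]

lemma exists_support_minimal [Finite ι] {P : (ι → ℝ) → Prop} (h : ∃ v, P v) :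
    ∃ v, P v ∧ ∀ v', P v' → ¬ support v' ⊂ support v :=
  (InvImage.wf support wellFounded_lt).has_min {v | P v} h

end Conformal

section Circuits

variable {r m : ℕ} {A : Matrix (Fin r) (Fin m) ℝ}

lemma exists_isCircuitR_isConformal {k : Fin m → ℝ} (hk : A *ᵥ k = 0) (hk0 : k ≠ 0) :
    ∃ C, IsCircuitR A C ∧ IsConformal C k := by
  obtain ⟨v, ⟨hv, hv0, hvk⟩, hmin⟩ := exists_support_minimal
    (P := fun v => A *ᵥ v = 0 ∧ v ≠ 0 ∧ IsConformal v k) ⟨k, hk, hk0, isConformal_self k⟩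
  refine ⟨v, ⟨hv0, hv, fun v' hv'0 hv' hsub => ?_⟩, hvk⟩
  by_contra hne
  have hssub : support v' ⊂ support v := (Set.ssubset_iff_subset_ne).2 ⟨hsub, hne⟩
  obtain ⟨i₁, hi₁v, hi₁v'⟩ := (Set.ssubset_iff_of_subset hsub).1 hssub
  obtain ⟨i, hi⟩ : ∃ i, v' i ≠ 0 := Function.ne_iff.1 hv'0
  -- scaling `v'` by `v' i * v i` makes it agree in sign with `v` at `i`
  set s := v' i * v i
  have hs : s ≠ 0 := mul_ne_zero hi (hsub hi)
  obtain ⟨t, -, hconf, hssub'⟩ := exists_sub_smul_isConformal (v := s • v') (k := v)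
    ((support_const_smul_of_ne_zero s v' hs).subset.trans hsub)
    ⟨i, by simpa [s, mul_assoc] using mul_self_pos.2 hs⟩
  refine hmin _ ⟨?_, Function.ne_iff.2 ⟨i₁, ?_⟩, hconf.trans hvk⟩ hssub'
  · simp [mulVec_sub, mulVec_smul, hv, hv']
  · simpa [show v' i₁ = 0 from not_not.1 hi₁v'] using hi₁v

lemma exists_isCircuitR_isConformal_dotProduct_neg {w k : Fin m → ℝ} (hk : A *ᵥ k = 0)
    (hwk : w ⬝ᵥ k < 0) : ∃ C, IsCircuitR A C ∧ IsConformal C k ∧ w ⬝ᵥ C < 0 := by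
  obtain ⟨v, ⟨hv, hwv, hvk⟩, hmin⟩ := exists_support_minimal
    (P := fun v => A *ᵥ v = 0 ∧ w ⬝ᵥ v < 0 ∧ IsConformal v k) ⟨k, hk, hwk, isConformal_self k⟩
  obtain ⟨C, hC, hCv⟩ := exists_isCircuitR_isConformal hv (by rintro rfl; simp at hwv)
  refine ⟨C, hC, hCv.trans hvk, not_le.1 fun hwC => ?_⟩
  obtain ⟨i, hi⟩ : ∃ i, C i ≠ 0 := Function.ne_iff.1 hC.1
  obtain ⟨t, ht, hconf, hssub⟩ := exists_sub_smul_isConformal hCv.support_subset ⟨i, hCv i hi⟩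
  refine hmin _ ⟨by simp [mulVec_sub, mulVec_smul, hv, hC.2.1], ?_, hconf.trans hvk⟩ hssub
  rw [dotProduct_sub, dotProduct_smul, smul_eq_mul]
  nlinarith

lemma SigmaCompatR.dotProduct_nonneg {w O k : Fin m → ℝ} (hO : SigmaCompatR A w O)
    (hk : A *ᵥ k = 0) (hOk : ∀ e, k e ≠ 0 → O e = Real.sign (k e)) : 0 ≤ w ⬝ᵥ k := by
  by_contra! hwk
  obtain ⟨C, hC, hCk, hwC⟩ := exists_isCircuitR_isConformal_dotProduct_neg hk hwk
  refine (hO C hC fun e he => ?_).not_gt hwC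
  have hCk' := hCk e he
  rw [hOk e (right_ne_zero_of_mul hCk'.ne'), (Real.mul_pos_iff_sign_eq he).1 hCk']

end Circuits

lemma support_eq_of_support_subset {ι : Type*} {V : Submodule ℝ (ι → ℝ)} {S : Set ι}
    (hS : ∀ v ∈ V, (∀ j ∈ S, v j = 0) → v = 0) {D : ι → ℝ} (hD : D ∈ V) {i : ι}
    (hDi : D i = 1) (hDS : ∀ j ∈ S, j ≠ i → D j = 0) {v : ι → ℝ} (hv : v ∈ V) (hv0 : v ≠ 0)
    (hsub : support v ⊆ support D) : support v = support D := by
  have hvD : v = v i • D := sub_eq_zero.1 <| hS _ (V.sub_mem hv (V.smul_mem _ hD)) fun j hj => by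
    by_cases hji : j = i
    · simp [hji, hDi]
    · have hvj : v j = 0 := not_not.1 fun h => hsub h (hDS j hj hji)
      simp [hvj, hDS j hj hji]
  have hvi : v i ≠ 0 := fun h => hv0 (by rw [hvD, h, zero_smul])
  rw [hvD, support_const_smul_of_ne_zero _ _ hvi]

namespace IsBasisR

variable {r m : ℕ} {A : Matrix (Fin r) (Fin m) ℝ} {B : Finset (Fin m)}

noncomputable def basis (hB : IsBasisR A B) : Module.Basis B ℝ (Fin r → ℝ) := .mk hB.1 hB.2.ge

lemma basis_apply (hB : IsBasisR A B) (f : B) : hB.basis f = A.col f := Module.Basis.mk_apply _ _ f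

noncomputable def fundCocircuit (hB : IsBasisR A B) (f : B) : Fin m → ℝ :=
  fun g => hB.basis.repr (A.col g) f

lemma fundCocircuit_apply_coe (hB : IsBasisR A B) (f g : B) :
    hB.fundCocircuit f g = if g = f then 1 else 0 := by
  simp [fundCocircuit, ← hB.basis_apply, Finsupp.single_apply]

lemma repr_mulVec_apply (hB : IsBasisR A B) (f : B) (x : Fin m → ℝ) :
    hB.basis.repr (A *ᵥ x) f = hB.fundCocircuit f ⬝ᵥ x := by
  simp [mulVec_eq_sum, fundCocircuit, dotProduct, Finsupp.finsetSum_apply, mul_comm]; rfl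

lemma fundCocircuit_dotProduct_of_forall_notMem (hB : IsBasisR A B) (f : B) {v : Fin m → ℝ}
    (hv : ∀ e ∉ B, v e = 0) : hB.fundCocircuit f ⬝ᵥ v = v f := by
  rw [dotProduct, Finset.sum_eq_single (f : Fin m) (fun g _ hgf => ?_) (by simp)]
  · simp [fundCocircuit_apply_coe]
  by_cases hg : g ∈ B
  · simp [hB.fundCocircuit_apply_coe f ⟨g, hg⟩, Subtype.ext_iff, hgf]
  · simp [hv g hg]

lemma eq_zero_of_mulVec_eq_zero (hB : IsBasisR A B) {v : Fin m → ℝ} (hv : A *ᵥ v = 0)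
    (hvB : ∀ e ∉ B, v e = 0) : v = 0 := by
  funext e
  by_cases he : e ∈ B
  · simpa [hv, hB.fundCocircuit_dotProduct_of_forall_notMem ⟨e, he⟩ hvB] using
      (hB.repr_mulVec_apply ⟨e, he⟩ v).symm
  · exact hvB e he

lemma col_eq_sum (hB : IsBasisR A B) (g : Fin m) :
    A.col g = ∑ f, hB.fundCocircuit f g • A.col f := by
  calc A.col g = ∑ f, hB.basis.repr (A.col g) f • hB.basis f := (hB.basis.sum_repr _).symm
    _ = _ := by simp only [basis_apply]; rfl

lemma vecMul_eq_zero (hB : IsBasisR A B) {y : Fin r → ℝ} (hy : ∀ f ∈ B, vecMul y A f = 0) :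
    vecMul y A = 0 := by
  funext g
  change y ⬝ᵥ A.col g = 0
  rw [hB.col_eq_sum, dotProduct_sum]
  exact Finset.sum_eq_zero fun f _ => by
    rw [dotProduct_smul, smul_eq_mul, show y ⬝ᵥ A.col f = 0 from hy f f.2, mul_zero]

lemma exists_fundCocircuit_eq_vecMul (hB : IsBasisR A B) (f : B) :
    ∃ y, hB.fundCocircuit f = vecMul y A := by
  classical
  refine ⟨fun i => hB.basis.coord f fun j => if i = j then 1 else 0, funext fun g => ?_⟩
  rw [fundCocircuit, ← Module.Basis.coord_apply,
    LinearMap.pi_apply_eq_sum_univ (hB.basis.coord f) (A.col g)]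
  simp [vecMul, dotProduct, mul_comm]

lemma isCocircuitR_fundCocircuit (hB : IsBasisR A B) (f : B) :
    IsCocircuitR A (hB.fundCocircuit f) := by
  have hf : hB.fundCocircuit f f = 1 := by simp [fundCocircuit_apply_coe]
  refine ⟨fun h => by simp [h] at hf, hB.exists_fundCocircuit_eq_vecMul f,
    fun v hv0 hv hsub => support_eq_of_support_subset (V := LinearMap.range A.vecMulLinear)
      (S := B) ?_ ?_ hf ?_ ?_ hv0 hsub⟩
  · rintro _ ⟨y, rfl⟩ hy
    exact hB.vecMul_eq_zero hy
  · obtain ⟨y, hy⟩ := hB.exists_fundCocircuit_eq_vecMul f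
    exact ⟨y, hy.symm⟩
  · intro j hj hjf
    simpa [Subtype.ext_iff, hjf] using hB.fundCocircuit_apply_coe f ⟨j, hj⟩
  · obtain ⟨y, hy⟩ := hv
    exact ⟨y, hy.symm⟩

noncomputable def lift (hB : IsBasisR A B) (y : Fin r → ℝ) : Fin m → ℝ :=
  extend (↑) (fun f : B => hB.basis.repr y f) 0

lemma lift_apply_coe (hB : IsBasisR A B) (y : Fin r → ℝ) (f : B) :
    hB.lift y f = hB.basis.repr y f :=
  Subtype.val_injective.extend_apply _ _ f

lemma lift_apply_of_notMem (hB : IsBasisR A B) (y : Fin r → ℝ) {e : Fin m} (he : e ∉ B) :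
    hB.lift y e = 0 :=
  extend_apply' _ _ _ fun ⟨f, hf⟩ => he (hf ▸ f.2)

lemma mulVec_lift (hB : IsBasisR A B) (y : Fin r → ℝ) : A *ᵥ hB.lift y = y :=
  hB.basis.ext_elem fun f => by
    rw [repr_mulVec_apply, fundCocircuit_dotProduct_of_forall_notMem _ _
      fun e he => hB.lift_apply_of_notMem y he, lift_apply_coe]

noncomputable def fundCircuit (hB : IsBasisR A B) (e : Fin m) : Fin m → ℝ :=
  Pi.single e 1 - hB.lift (A.col e)

lemma mulVec_fundCircuit (hB : IsBasisR A B) (e : Fin m) : A *ᵥ hB.fundCircuit e = 0 := by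
  simp [fundCircuit, mulVec_sub, mulVec_lift]

lemma fundCircuit_apply_of_notMem (hB : IsBasisR A B) {e g : Fin m} (hg : g ∉ B) :
    hB.fundCircuit e g = if g = e then 1 else 0 := by
  simp [fundCircuit, hB.lift_apply_of_notMem _ hg, Pi.single_apply]

lemma isCircuitR_fundCircuit (hB : IsBasisR A B) {e : Fin m} (he : e ∉ B) :
    IsCircuitR A (hB.fundCircuit e) := by
  have he1 : hB.fundCircuit e e = 1 := by simp [hB.fundCircuit_apply_of_notMem he]
  refine ⟨fun h => by simp [h] at he1, hB.mulVec_fundCircuit e,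
    fun v hv0 hv hsub => support_eq_of_support_subset (V := LinearMap.ker A.mulVecLin)
      (S := (B : Set (Fin m))ᶜ) ?_ (hB.mulVec_fundCircuit e) he1 ?_ hv hv0 hsub⟩
  · exact fun v hv hvB => hB.eq_zero_of_mulVec_eq_zero hv hvB
  · intro g hg hge
    simp [hB.fundCircuit_apply_of_notMem hg, hge]

lemma fundCircuitR_fundCircuit (hB : IsBasisR A B) {e : Fin m} (he : e ∉ B) :
    FundCircuitR A B e (hB.fundCircuit e) :=
  ⟨hB.isCircuitR_fundCircuit he, fun g hg => or_iff_not_imp_left.2 fun hgB => by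
    simpa [hB.fundCircuit_apply_of_notMem hgB] using hg, by
    simp [hB.fundCircuit_apply_of_notMem he]⟩

lemma eq_fundCircuit (hB : IsBasisR A B) {e : Fin m} (he : e ∉ B) {C : Fin m → ℝ}
    (hC : FundCircuitR A B e C) : C = hB.fundCircuit e := by
  refine sub_eq_zero.1 (hB.eq_zero_of_mulVec_eq_zero ?_ fun g hg => ?_)
  · simp [mulVec_sub, hC.1.2.1, mulVec_fundCircuit]
  · by_cases hge : g = e
    · simp [hge, hC.2.2, hB.fundCircuit_apply_of_notMem he]
    · have hCg : C g = 0 := not_not.1 fun h => (hC.2.1 g h).elim hg hge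
      simp [hCg, hB.fundCircuit_apply_of_notMem hg, hge]

lemma eq_sum_fundCircuit (hB : IsBasisR A B) {v : Fin m → ℝ} (hv : A *ᵥ v = 0) :
    v = ∑ e ∈ Bᶜ, v e • hB.fundCircuit e := by
  refine sub_eq_zero.1 (hB.eq_zero_of_mulVec_eq_zero ?_ fun g hg => ?_)
  · simp [mulVec_sub, mulVec_sum, mulVec_smul, hv, mulVec_fundCircuit]
  · rw [Pi.sub_apply, Finset.sum_apply, Finset.sum_eq_single g (fun e _ heg => ?_) (by simp [hg])]
    · simp [hB.fundCircuit_apply_of_notMem hg]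
    · simp [hB.fundCircuit_apply_of_notMem hg, Ne.symm heg]

lemma dotProduct_pos_of_mul_pos (hB : IsBasisR A B) {w v : Fin m → ℝ} (hv : A *ᵥ v = 0)
    (hv0 : v ≠ 0) (hpos : ∀ e ∉ B, v e ≠ 0 → 0 < v e * (w ⬝ᵥ hB.fundCircuit e)) :
    0 < w ⬝ᵥ v := by
  obtain ⟨e, he, hve⟩ : ∃ e ∉ B, v e ≠ 0 := by
    by_contra! h
    exact hv0 (hB.eq_zero_of_mulVec_eq_zero hv h)
  have hsum := congrArg (w ⬝ᵥ ·) (hB.eq_sum_fundCircuit hv)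
  simp only [dotProduct_sum, dotProduct_smul, smul_eq_mul] at hsum
  rw [hsum]
  refine Finset.sum_pos' (fun g hg => ?_) ⟨e, Finset.mem_compl.2 he, hpos e he hve⟩
  by_cases hvg : v g = 0
  · simp [hvg]
  · exact (hpos g (Finset.mem_compl.1 hg) hvg).le

lemma finite_setOf_mulVec_eq_zero (hB : IsBasisR A B) {S : Set ℝ} (hS : S.Finite) :
    {v : Fin m → ℝ | A *ᵥ v = 0 ∧ ∀ e ∉ B, v e ∈ S}.Finite := by
  refine Set.Finite.of_finite_image (f := fun v (e : {e // e ∉ B}) => v e)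
    ((Set.Finite.pi fun _ => hS).subset ?_) fun v hv v' hv' h => ?_
  · rintro _ ⟨v, hv, rfl⟩ e -
    exact hv.2 e e.2
  · refine sub_eq_zero.1 (hB.eq_zero_of_mulVec_eq_zero (by simp [mulVec_sub, hv.1, hv'.1])
      fun e he => sub_eq_zero.2 (congrFun h ⟨e, he⟩))

noncomputable def signOrientation (hB : IsBasisR A B) (w : Fin m → ℝ) : Fin m → ℝ := fun e =>
  if h : e ∈ B then Real.sign (w ⬝ᵥ hB.fundCocircuit ⟨e, h⟩)
  else Real.sign (w ⬝ᵥ hB.fundCircuit e)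

lemma signOrientation_apply_coe (hB : IsBasisR A B) (w : Fin m → ℝ) (f : B) :
    hB.signOrientation w f = Real.sign (w ⬝ᵥ hB.fundCocircuit f) := by
  simp [signOrientation]

lemma signOrientation_apply_of_notMem (hB : IsBasisR A B) (w : Fin m → ℝ) {e : Fin m}
    (he : e ∉ B) : hB.signOrientation w e = Real.sign (w ⬝ᵥ hB.fundCircuit e) := by
  simp [signOrientation, he]

variable {w : Fin m → ℝ}

lemma isOrientationR_signOrientation (hB : IsBasisR A B)
    (hwC : ∀ e ∉ B, w ⬝ᵥ hB.fundCircuit e ≠ 0) (hwD : ∀ f, w ⬝ᵥ hB.fundCocircuit f ≠ 0) :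
    IsOrientationR (hB.signOrientation w) := fun e => by
  by_cases he : e ∈ B
  · simpa [signOrientation, he, or_comm] using Real.sign_apply_eq_of_ne_zero _ (hwD ⟨e, he⟩)
  · simpa [signOrientation, he, or_comm] using Real.sign_apply_eq_of_ne_zero _ (hwC e he)

lemma sigmaCompatR_signOrientation (hB : IsBasisR A B) :
    SigmaCompatR A w (hB.signOrientation w) := fun C hC hcomp =>
  hB.dotProduct_pos_of_mul_pos hC.2.1 hC.1 fun e he hCe => (Real.mul_pos_iff_sign_eq hCe).2 <| by
    rw [← hcomp e hCe, signOrientation_apply_of_notMem hB w he]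

lemma ZB_eq (hB : IsBasisR A B) (hwC : ∀ e ∉ B, w ⬝ᵥ hB.fundCircuit e ≠ 0) :
    ZB A w B = {z | ∃ x : Fin m → ℝ, (∀ e, x e ∈ Set.Icc (0 : ℝ) 1) ∧
      (∀ e ∉ B, x e = (hB.signOrientation w e + 1) / 2) ∧ z = A *ᵥ x} := by
  ext z
  refine exists_congr fun x => and_congr_right fun _ => and_congr_left fun _ =>
    forall₂_congr fun e he => ?_
  rw [signOrientation_apply_of_notMem hB w he]
  constructor
  · intro hx
    have hxC := hx _ (hB.fundCircuitR_fundCircuit he)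
    rcases (hwC e he).lt_or_gt with hn | hp
    · simp [hxC.2 hn, Real.sign_of_neg hn]
    · simp [hxC.1 hp, Real.sign_of_pos hp]
  · rintro hx C hC
    rw [hB.eq_fundCircuit he hC]
    exact ⟨fun hp => by simp [hx, Real.sign_of_pos hp],
      fun hn => by simp [hx, Real.sign_of_neg hn]⟩

lemma psiR_signOrientation_mem (hB : IsBasisR A B) (hwC : ∀ e ∉ B, w ⬝ᵥ hB.fundCircuit e ≠ 0)
    {ε : ℝ} (hε : 0 ≤ ε) (hsmall : ∀ f, ε * |w ⬝ᵥ hB.fundCocircuit f| ≤ 1) :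
    ∃ z₀ ∈ ZB A w B, psiR A (hB.signOrientation w) = z₀ + ε • A *ᵥ w := by
  rw [hB.ZB_eq hwC]
  refine ⟨_, ⟨(fun e => (hB.signOrientation w e + 1) / 2) - ε • hB.lift (A *ᵥ w),
    fun e => ?_, fun e he => by simp [hB.lift_apply_of_notMem _ he], rfl⟩, ?_⟩
  · by_cases he : e ∈ B
    · simpa [← signOrientation_apply_coe hB w ⟨e, he⟩, lift_apply_coe hB _ ⟨e, he⟩,
        repr_mulVec_apply, dotProduct_comm] using
        sign_add_one_div_two_sub_mem_Icc _ hε (hsmall ⟨e, he⟩)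
    · simpa [signOrientation_apply_of_notMem hB w he, hB.lift_apply_of_notMem _ he] using
        sign_add_one_div_two_sub_mem_Icc (w ⬝ᵥ hB.fundCircuit e) le_rfl (by simp)
  · simp [psiR, mulVec_sub, mulVec_smul, mulVec_lift]

open Filter Topology in
lemma eventually_small (hB : IsBasisR A B) (w : Fin m → ℝ) :
    ∀ᶠ ε in 𝓝 (0 : ℝ), (∀ f : B, ε * |w ⬝ᵥ hB.fundCocircuit f| < 1) ∧
      ∀ k, A *ᵥ k = 0 → (∀ e ∉ B, k e ∈ ({-1, 0, 1} : Set ℝ)) →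
        ∀ f : B, k f ≠ 0 → ε * |w ⬝ᵥ hB.fundCocircuit f| < |k f| := by
  have hK := (hB.finite_setOf_mulVec_eq_zero (S := {-1, 0, 1}) (by simp)).eventually_all
    (l := 𝓝 0) (p := fun k ε => ∀ f : B, k f ≠ 0 → ε * |w ⬝ᵥ hB.fundCocircuit f| < |k f|)
  refine (eventually_all.2 fun f => eventually_mul_abs_lt _ one_pos).and <|
    (hK.2 fun k _ => eventually_all.2 fun f => ?_).mono fun ε h k hk hkB => h k ⟨hk, hkB⟩
  by_cases hkf : k f = 0
  · exact .of_forall fun _ h => (h hkf).elim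
  · exact (eventually_mul_abs_lt _ (abs_pos.2 hkf)).mono fun _ h _ => h

lemma eq_zero_of_forall_sign_eq (hB : IsBasisR A B) (hwC : ∀ e ∉ B, w ⬝ᵥ hB.fundCircuit e ≠ 0)
    {O k : Fin m → ℝ} (hO : IsOrientationR O) (hOσ : SigmaCompatR A w O) (hk : A *ᵥ k = 0)
    (hOk : ∀ e, k e ≠ 0 → O e = Real.sign (k e))
    (hkB : ∀ e ∉ B, k e = (O e - hB.signOrientation w e) / 2) : k = 0 := by
  by_contra hk0
  refine (hOσ.dotProduct_nonneg hk hOk).not_gt ?_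
  have hneg : 0 < w ⬝ᵥ -k := hB.dotProduct_pos_of_mul_pos (by simp [mulVec_neg, hk])
    (neg_ne_zero.2 hk0) fun e he hke => by
      rw [Pi.neg_apply, hkB e he, hB.signOrientation_apply_of_notMem w he] at hke ⊢
      convert sign_sub_div_two_mul_pos (hO e) (hwC e he) (by convert hke using 1; ring) using 1
      ring
  simpa using hneg

lemma eq_signOrientation (hB : IsBasisR A B) (hwC : ∀ e ∉ B, w ⬝ᵥ hB.fundCircuit e ≠ 0)
    (hwD : ∀ f, w ⬝ᵥ hB.fundCocircuit f ≠ 0) {ε : ℝ} (hε : 0 < ε)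
    (hsmall : ∀ k, A *ᵥ k = 0 → (∀ e ∉ B, k e ∈ ({-1, 0, 1} : Set ℝ)) →
      ∀ f : B, k f ≠ 0 → ε * |w ⬝ᵥ hB.fundCocircuit f| < |k f|)
    {O x : Fin m → ℝ} (hO : IsOrientationR O) (hOσ : SigmaCompatR A w O)
    (hx : ∀ e, x e ∈ Set.Icc (0 : ℝ) 1) (hxB : ∀ e ∉ B, x e = (hB.signOrientation w e + 1) / 2)
    (hψ : psiR A O = A *ᵥ x + ε • A *ᵥ w) : O = hB.signOrientation w := by
  have hO' := hB.isOrientationR_signOrientation hwC hwD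
  set k := (fun e => (O e + 1) / 2) - x - ε • hB.lift (A *ᵥ w) with hk_def
  have hk : A *ᵥ k = 0 := by
    rw [hk_def, mulVec_sub, mulVec_sub, mulVec_smul, mulVec_lift, ← psiR, hψ]
    abel
  have hkB : ∀ e ∉ B, k e = (O e - hB.signOrientation w e) / 2 := fun e he => by
    simp only [hk_def, Pi.sub_apply, Pi.smul_apply, hxB e he, hB.lift_apply_of_notMem _ he]
    ring
  have hkf : ∀ f : B, (O f + 1) / 2 - x f - k f = ε * (w ⬝ᵥ hB.fundCocircuit f) := fun f => by
    simp [hk_def, lift_apply_coe, repr_mulVec_apply, dotProduct_comm]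
  have hOk : ∀ e, k e ≠ 0 → O e = Real.sign (k e) := fun e hke => by
    refine eq_sign_of_abs_sub_lt (hO e) (hx e) ?_
    by_cases he : e ∈ B
    · have hk_mem e (he : e ∉ B) : k e ∈ ({-1, 0, 1} : Set ℝ) :=
        hkB e he ▸ sub_div_two_mem (hO e) (hO' e)
      simpa [hkf ⟨e, he⟩, abs_mul, abs_of_pos hε] using hsmall k hk hk_mem ⟨e, he⟩ hke
    · simpa [hk_def, hxB e he, hB.lift_apply_of_notMem _ he] using hke
  have hk0 := hB.eq_zero_of_forall_sign_eq hwC hO hOσ hk hOk hkB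
  funext e
  by_cases he : e ∈ B
  · have hkf' := hkf ⟨e, he⟩
    simp only [hk0, Pi.zero_apply, sub_zero] at hkf'
    rw [eq_sign_of_abs_sub_lt (hO e) (hx e) (d := ε * (w ⬝ᵥ hB.fundCocircuit ⟨e, he⟩))
      (by rw [hkf', sub_self, abs_zero]; exact abs_pos.2 (mul_ne_zero hε.ne' (hwD _))),
      signOrientation_apply_coe hB w ⟨e, he⟩]
    refine (Real.mul_pos_iff_sign_eq (mul_ne_zero hε.ne' (hwD _))).1 ?_
    nlinarith [mul_self_pos.2 (hwD ⟨e, he⟩)]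
  · have hke := hkB e he
    rw [hk0, Pi.zero_apply] at hke
    linarith

end IsBasisR

theorem stmt18_general {r m : ℕ} (A : Matrix (Fin r) (Fin m) ℝ)
    (w : Fin m → ℝ)
    (hw : ∀ C : Fin m → ℝ, IsCircuitR A C → w ⬝ᵥ C ≠ 0)
    (hwstar : ∀ D : Fin m → ℝ, IsCocircuitR A D → w ⬝ᵥ D ≠ 0)
    (B : Finset (Fin m)) (hB : IsBasisR A B) :
    ∃ ε₀ > (0 : ℝ), ∀ ε : ℝ, 0 < ε → ε < ε₀ →
      ∃! z : Fin r → ℝ, (∃ z₀ ∈ ZB A w B, z = z₀ + ε • A.mulVec w) ∧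
        ∃ O : Fin m → ℝ, IsOrientationR O ∧ SigmaCompatR A w O ∧ psiR A O = z := by
  have hwC e (he : e ∉ B) := hw _ (hB.isCircuitR_fundCircuit he)
  have hwD f := hwstar _ (hB.isCocircuitR_fundCocircuit f)
  obtain ⟨ε₀, hε₀, hsmall⟩ := Metric.eventually_nhds_iff.1 (hB.eventually_small w)
  refine ⟨ε₀, hε₀, fun ε hε hεε₀ => ?_⟩
  obtain ⟨hsmall₁, hsmallK⟩ := hsmall (by rwa [Real.dist_0_eq_abs, abs_of_pos hε])
  obtain ⟨z₀, hz₀, hψ⟩ := hB.psiR_signOrientation_mem hwC hε.le fun f => (hsmall₁ f).le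
  refine ⟨_, ⟨⟨z₀, hz₀, hψ⟩, _, hB.isOrientationR_signOrientation hwC hwD,
    hB.sigmaCompatR_signOrientation, rfl⟩, ?_⟩
  rintro _ ⟨⟨_, hz, rfl⟩, O, hO, hOσ, hψO⟩
  rw [hB.ZB_eq hwC] at hz
  obtain ⟨x, hx, hxB, rfl⟩ := hz
  rw [← hψO, hB.eq_signOrientation hwC hwD hε hsmallK hO hOσ hx hxB hψO]

/-- For every basis `B` there is `ε₀ > 0` such that for all `0 < ε < ε₀` the shifted cell
`Z(B) + εAw` contains exactly one point of the form `ψ(O)` for a σ-compatible discrete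
orientation `O`. -/
theorem stmt18 {r m : ℕ} (A : Matrix (Fin r) (Fin m) ℝ) (hrank : A.rank = r)
    (w : Fin m → ℝ)
    (hw : ∀ C : Fin m → ℝ, IsCircuitR A C → w ⬝ᵥ C ≠ 0)
    (hwstar : ∀ D : Fin m → ℝ, IsCocircuitR A D → w ⬝ᵥ D ≠ 0)
    (B : Finset (Fin m)) (hB : IsBasisR A B) :
    ∃ ε₀ > (0 : ℝ), ∀ ε : ℝ, 0 < ε → ε < ε₀ →
      ∃! z : Fin r → ℝ, (∃ z₀ ∈ ZB A w B, z = z₀ + ε • A.mulVec w) ∧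
        ∃ O : Fin m → ℝ, IsOrientationR O ∧ SigmaCompatR A w O ∧ psiR A O = z :=
  stmt18_general A w hw hwstar B hB
end
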